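/- arXiv:1912.08584 — 9 statements merged into one kernel-verified Lean document; each statement's English description precedes it below -/
import Mathlib

section
/- Fix m ∈ ℕ, m ≥ 1, and positive real numbers ξ₁, …, ξ_m. Then the Root-estimator converges to the CFG-estimator as p → ∞: lim_{p→∞} Γ(1+1/p)^p · ( (1/m) Σ_{i=1}^m ξ_i^{1/p} )^{−p} = e^{−γ} · exp( −(1/m) Σ_{i=1}^m log ξ_i ). -/
/-!
Both factors have the form `f (1/p) ^ p` with `f 0 = 1`, namely `f t = Γ(1 + t)` and the power
mean `f t = (1/m) Σ ξᵢ ^ t`. For such `f`, `p * log f (1/p)` is a difference quotient of `log ∘ f`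
at `0`, so `f (1/p) ^ p → exp (f' 0)`. Here `Γ'(1) = -γ` and the power mean has derivative
`(1/m) Σ log ξᵢ` at `0`.
-/

open Real Filter Topology

theorem tendsto_one_div_atTop_nhdsNE_zero : Tendsto (fun p : ℝ => 1 / p) atTop (𝓝[≠] 0) :=
  (tendsto_inv_atTop_nhdsGT_zero.mono_right
    (nhdsWithin_mono 0 fun (x : ℝ) (hx : 0 < x) => hx.ne')).congr fun p => (one_div p).symm

theorem tendsto_mul_comp_one_div_of_hasDerivAt {g : ℝ → ℝ} {d : ℝ} (hg : HasDerivAt g d 0)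
    (hg0 : g 0 = 0) : Tendsto (fun p : ℝ => p * g (1 / p)) atTop (𝓝 d) := by
  refine ((hasDerivAt_iff_tendsto_slope.mp hg).comp tendsto_one_div_atTop_nhdsNE_zero).congr' ?_
  filter_upwards [eventually_ne_atTop 0] with p hp
  simp [slope_def_field, hg0, mul_comm]

theorem tendsto_rpow_comp_one_div_of_hasDerivAt {f : ℝ → ℝ} {d : ℝ} (hf : HasDerivAt f d 0)
    (hf0 : f 0 = 1) : Tendsto (fun p : ℝ => f (1 / p) ^ p) atTop (𝓝 (exp d)) := by
  have hlog : HasDerivAt (fun t => log (f t)) d 0 := by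
    simpa [hf0] using hf.log (by simp [hf0])
  have hpos : ∀ᶠ p : ℝ in atTop, 0 < f (1 / p) := by
    have hcont : Tendsto (fun p : ℝ => f (1 / p)) atTop (𝓝 (f 0)) :=
      hf.continuousAt.tendsto.comp
        (tendsto_one_div_atTop_nhdsNE_zero.mono_right nhdsWithin_le_nhds)
    exact hcont.eventually (lt_mem_nhds (by rw [hf0]; exact one_pos))
  refine ((continuous_exp.tendsto d).comp
    (tendsto_mul_comp_one_div_of_hasDerivAt hlog (by simp [hf0]))).congr' ?_
  filter_upwards [hpos] with p hp
  rw [rpow_def_of_pos hp, mul_comm, Function.comp_apply]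

theorem hasDerivAt_mean_rpow {ι : Type*} [Fintype ι] (ξ : ι → ℝ) (hξ : ∀ i, 0 < ξ i) :
    HasDerivAt (fun t : ℝ => (1 / (Fintype.card ι : ℝ)) * ∑ i, ξ i ^ t)
      ((1 / (Fintype.card ι : ℝ)) * ∑ i, log (ξ i)) 0 := by
  have := (HasDerivAt.fun_sum (u := Finset.univ)
    fun i _ => (hasStrictDerivAt_const_rpow (hξ i) 0).hasDerivAt).const_mul
      (1 / (Fintype.card ι : ℝ))
  simpa using this

theorem tendsto_gamma_one_add_one_div_rpow :
    Tendsto (fun p : ℝ => Gamma (1 + 1 / p) ^ p) atTop (𝓝 (exp (-eulerMascheroniConstant))) := by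
  refine tendsto_rpow_comp_one_div_of_hasDerivAt (f := fun t => Gamma (1 + t)) ?_ (by simp)
  exact HasDerivAt.comp_const_add 1 0 (by simpa using hasDerivAt_Gamma_one)

theorem tendsto_mean_rpow_one_div_rpow {ι : Type*} [Fintype ι] [Nonempty ι] (ξ : ι → ℝ)
    (hξ : ∀ i, 0 < ξ i) :
    Tendsto (fun p : ℝ => ((1 / (Fintype.card ι : ℝ)) * ∑ i, ξ i ^ (1 / p)) ^ p) atTop
      (𝓝 (exp ((1 / (Fintype.card ι : ℝ)) * ∑ i, log (ξ i)))) :=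
  tendsto_rpow_comp_one_div_of_hasDerivAt (hasDerivAt_mean_rpow ξ hξ) (by simp)

/-- As `p → ∞`, the Root-estimator based on the sample `ξ₁, …, ξ_m` converges to the
CFG-estimator:
`lim_{p→∞} Γ(1+1/p)^p ((1/m) Σ ξ_i^{1/p})^{-p} = e^{-γ} exp(-(1/m) Σ log ξ_i)`. -/
theorem root_tendsto_cfg (m : ℕ) (hm : 1 ≤ m) (ξ : Fin m → ℝ) (hξ : ∀ i, 0 < ξ i) :
    Tendsto
      (fun p : ℝ =>
        Real.Gamma (1 + 1 / p) ^ p * ((1 / (m : ℝ)) * ∑ i, ξ i ^ (1 / p)) ^ (-p))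
      atTop
      (nhds (Real.exp (-Real.eulerMascheroniConstant) *
        Real.exp (-((1 / (m : ℝ)) * ∑ i, Real.log (ξ i))))) := by
  have : Nonempty (Fin m) := ⟨⟨0, hm⟩⟩
  have hmean := tendsto_mean_rpow_one_div_rpow ξ hξ
  rw [Fintype.card_fin] at hmean
  refine tendsto_gamma_one_add_one_div_rpow.mul ?_
  rw [exp_neg]
  refine (hmean.inv₀ (exp_pos _).ne').congr fun p => ?_
  have hmean_nonneg : 0 ≤ (1 / (m : ℝ)) * ∑ i, ξ i ^ (1 / p) :=
    mul_nonneg (by positivity) (Finset.sum_nonneg fun i _ => rpow_nonneg (hξ i).le _)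
  rw [rpow_neg hmean_nonneg]
end

section
/- Let X and Y be real-valued random variables on a probability space such that the product XY is integrable. Then E[XY] = ∫₀^∞∫₀^∞ P(X > x, Y > y) dx dy + ∫_{−∞}^0∫_{−∞}^0 P(X ≤ x, Y ≤ y) dx dy − ∫_{−∞}^0∫₀^∞ P(X > x, Y ≤ y) dx dy − ∫₀^∞∫_{−∞}^0 P(X ≤ x, Y > y) dx dy. -/
open MeasureTheory Set

section Aux

variable {Ω : Type*} [MeasurableSpace Ω]

private lemma inner_lt' (P : Measure Ω) {f : Ω → ℝ} (hf : Measurable f) (hf0 : ∀ ω, 0 ≤ f ω)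
    {S : Set Ω} (hS : MeasurableSet S) :
    ∫⁻ x in Set.Ioi (0:ℝ), P ({ω | x < f ω} ∩ S) =
      (P.withDensity fun ω => ENNReal.ofReal (f ω)) S := by
  rw [withDensity_apply _ hS]
  have h1 : ∀ x : ℝ, P ({ω | x < f ω} ∩ S) = (P.restrict S) {ω | x < f ω} := fun x =>
    (Measure.restrict_apply (measurableSet_lt measurable_const hf)).symm
  simp_rw [h1]
  exact (lintegral_eq_lintegral_meas_lt (P.restrict S) (ae_of_all _ hf0) hf.aemeasurable).symm

private lemma inner_le' (P : Measure Ω) {f : Ω → ℝ} (hf : Measurable f) (hf0 : ∀ ω, 0 ≤ f ω)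
    {S : Set Ω} (hS : MeasurableSet S) :
    ∫⁻ x in Set.Ioi (0:ℝ), P ({ω | x ≤ f ω} ∩ S) =
      (P.withDensity fun ω => ENNReal.ofReal (f ω)) S := by
  rw [withDensity_apply _ hS]
  have h1 : ∀ x : ℝ, P ({ω | x ≤ f ω} ∩ S) = (P.restrict S) {ω | x ≤ f ω} := fun x =>
    (Measure.restrict_apply (measurableSet_le measurable_const hf)).symm
  simp_rw [h1]
  exact (lintegral_eq_lintegral_meas_le (P.restrict S) (ae_of_all _ hf0) hf.aemeasurable).symm

private lemma outer_lt' (P : Measure Ω) {f g : Ω → ℝ} (hf : Measurable f) (hg : Measurable g)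
    (hf0 : ∀ ω, 0 ≤ f ω) (hg0 : ∀ ω, 0 ≤ g ω) :
    ∫⁻ y in Set.Ioi (0:ℝ), (P.withDensity fun ω => ENNReal.ofReal (f ω)) {ω | y < g ω} =
      ∫⁻ ω, ENNReal.ofReal (f ω * g ω) ∂P := by
  rw [← lintegral_eq_lintegral_meas_lt _ (ae_of_all _ hg0) hg.aemeasurable,
    lintegral_withDensity_eq_lintegral_mul P hf.ennreal_ofReal hg.ennreal_ofReal]
  refine lintegral_congr fun ω => ?_
  simp [ENNReal.ofReal_mul (hf0 ω)]

private lemma outer_le' (P : Measure Ω) {f g : Ω → ℝ} (hf : Measurable f) (hg : Measurable g)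
    (hf0 : ∀ ω, 0 ≤ f ω) (hg0 : ∀ ω, 0 ≤ g ω) :
    ∫⁻ y in Set.Ioi (0:ℝ), (P.withDensity fun ω => ENNReal.ofReal (f ω)) {ω | y ≤ g ω} =
      ∫⁻ ω, ENNReal.ofReal (f ω * g ω) ∂P := by
  rw [← lintegral_eq_lintegral_meas_le _ (ae_of_all _ hg0) hg.aemeasurable,
    lintegral_withDensity_eq_lintegral_mul P hf.ennreal_ofReal hg.ennreal_ofReal]
  refine lintegral_congr fun ω => ?_
  simp [ENNReal.ofReal_mul (hf0 ω)]

private lemma real_lt_lt (P : Measure Ω) [IsFiniteMeasure P] {f g : Ω → ℝ}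
    (hf : Measurable f) (hg : Measurable g) (hf0 : ∀ ω, 0 ≤ f ω) (hg0 : ∀ ω, 0 ≤ g ω)
    (hfin : ∫⁻ ω, ENNReal.ofReal (f ω * g ω) ∂P ≠ ⊤) :
    ∫ y in Set.Ioi (0:ℝ), ∫ x in Set.Ioi (0:ℝ), (P {ω | x < f ω ∧ y < g ω}).toReal =
      (∫⁻ ω, ENNReal.ofReal (f ω * g ω) ∂P).toReal := by
  set ν := P.withDensity fun ω => ENNReal.ofReal (f ω) with hν
  have step1 : ∀ y : ℝ, ∫ x in Set.Ioi (0:ℝ), (P {ω | x < f ω ∧ y < g ω}).toReal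
      = (ν {ω | y < g ω}).toReal := by
    intro y
    have anti : Antitone fun x : ℝ => P {ω | x < f ω ∧ y < g ω} := fun a b hab =>
      measure_mono fun ω hω => ⟨lt_of_le_of_lt hab hω.1, hω.2⟩
    rw [integral_toReal anti.measurable.aemeasurable
      (ae_of_all _ fun x => measure_lt_top _ _)]
    congr 1
    exact inner_lt' P hf hf0 (measurableSet_lt measurable_const hg)
  simp_rw [step1]
  have anti2 : Antitone fun y : ℝ => ν {ω | y < g ω} := fun a b hab =>
    measure_mono fun ω hω => lt_of_le_of_lt hab hω
  have key : ∫⁻ y in Set.Ioi (0:ℝ), ν {ω | y < g ω} = ∫⁻ ω, ENNReal.ofReal (f ω * g ω) ∂P :=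
    outer_lt' P hf hg hf0 hg0
  rw [integral_toReal anti2.measurable.aemeasurable
    (ae_lt_top anti2.measurable (by rw [key]; exact hfin)), key]

private lemma real_le_le (P : Measure Ω) [IsFiniteMeasure P] {f g : Ω → ℝ}
    (hf : Measurable f) (hg : Measurable g) (hf0 : ∀ ω, 0 ≤ f ω) (hg0 : ∀ ω, 0 ≤ g ω)
    (hfin : ∫⁻ ω, ENNReal.ofReal (f ω * g ω) ∂P ≠ ⊤) :
    ∫ y in Set.Ioi (0:ℝ), ∫ x in Set.Ioi (0:ℝ), (P {ω | x ≤ f ω ∧ y ≤ g ω}).toReal =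
      (∫⁻ ω, ENNReal.ofReal (f ω * g ω) ∂P).toReal := by
  set ν := P.withDensity fun ω => ENNReal.ofReal (f ω) with hν
  have step1 : ∀ y : ℝ, ∫ x in Set.Ioi (0:ℝ), (P {ω | x ≤ f ω ∧ y ≤ g ω}).toReal
      = (ν {ω | y ≤ g ω}).toReal := by
    intro y
    have anti : Antitone fun x : ℝ => P {ω | x ≤ f ω ∧ y ≤ g ω} := fun a b hab =>
      measure_mono fun ω hω => ⟨hab.trans hω.1, hω.2⟩
    rw [integral_toReal anti.measurable.aemeasurable
      (ae_of_all _ fun x => measure_lt_top _ _)]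
    congr 1
    exact inner_le' P hf hf0 (measurableSet_le measurable_const hg)
  simp_rw [step1]
  have anti2 : Antitone fun y : ℝ => ν {ω | y ≤ g ω} := fun a b hab =>
    measure_mono fun ω hω => hab.trans hω
  have key : ∫⁻ y in Set.Ioi (0:ℝ), ν {ω | y ≤ g ω} = ∫⁻ ω, ENNReal.ofReal (f ω * g ω) ∂P :=
    outer_le' P hf hg hf0 hg0
  rw [integral_toReal anti2.measurable.aemeasurable
    (ae_lt_top anti2.measurable (by rw [key]; exact hfin)), key]

private lemma real_lt_le (P : Measure Ω) [IsFiniteMeasure P] {f g : Ω → ℝ}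
    (hf : Measurable f) (hg : Measurable g) (hf0 : ∀ ω, 0 ≤ f ω) (hg0 : ∀ ω, 0 ≤ g ω)
    (hfin : ∫⁻ ω, ENNReal.ofReal (f ω * g ω) ∂P ≠ ⊤) :
    ∫ y in Set.Ioi (0:ℝ), ∫ x in Set.Ioi (0:ℝ), (P {ω | x < f ω ∧ y ≤ g ω}).toReal =
      (∫⁻ ω, ENNReal.ofReal (f ω * g ω) ∂P).toReal := by
  set ν := P.withDensity fun ω => ENNReal.ofReal (f ω) with hν
  have step1 : ∀ y : ℝ, ∫ x in Set.Ioi (0:ℝ), (P {ω | x < f ω ∧ y ≤ g ω}).toReal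
      = (ν {ω | y ≤ g ω}).toReal := by
    intro y
    have anti : Antitone fun x : ℝ => P {ω | x < f ω ∧ y ≤ g ω} := fun a b hab =>
      measure_mono fun ω hω => ⟨lt_of_le_of_lt hab hω.1, hω.2⟩
    rw [integral_toReal anti.measurable.aemeasurable
      (ae_of_all _ fun x => measure_lt_top _ _)]
    congr 1
    exact inner_lt' P hf hf0 (measurableSet_le measurable_const hg)
  simp_rw [step1]
  have anti2 : Antitone fun y : ℝ => ν {ω | y ≤ g ω} := fun a b hab =>
    measure_mono fun ω hω => hab.trans hω
  have key : ∫⁻ y in Set.Ioi (0:ℝ), ν {ω | y ≤ g ω} = ∫⁻ ω, ENNReal.ofReal (f ω * g ω) ∂P :=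
    outer_le' P hf hg hf0 hg0
  rw [integral_toReal anti2.measurable.aemeasurable
    (ae_lt_top anti2.measurable (by rw [key]; exact hfin)), key]

private lemma real_le_lt (P : Measure Ω) [IsFiniteMeasure P] {f g : Ω → ℝ}
    (hf : Measurable f) (hg : Measurable g) (hf0 : ∀ ω, 0 ≤ f ω) (hg0 : ∀ ω, 0 ≤ g ω)
    (hfin : ∫⁻ ω, ENNReal.ofReal (f ω * g ω) ∂P ≠ ⊤) :
    ∫ y in Set.Ioi (0:ℝ), ∫ x in Set.Ioi (0:ℝ), (P {ω | x ≤ f ω ∧ y < g ω}).toReal =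
      (∫⁻ ω, ENNReal.ofReal (f ω * g ω) ∂P).toReal := by
  set ν := P.withDensity fun ω => ENNReal.ofReal (f ω) with hν
  have step1 : ∀ y : ℝ, ∫ x in Set.Ioi (0:ℝ), (P {ω | x ≤ f ω ∧ y < g ω}).toReal
      = (ν {ω | y < g ω}).toReal := by
    intro y
    have anti : Antitone fun x : ℝ => P {ω | x ≤ f ω ∧ y < g ω} := fun a b hab =>
      measure_mono fun ω hω => ⟨hab.trans hω.1, hω.2⟩
    rw [integral_toReal anti.measurable.aemeasurable
      (ae_of_all _ fun x => measure_lt_top _ _)]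
    congr 1
    exact inner_le' P hf hf0 (measurableSet_lt measurable_const hg)
  simp_rw [step1]
  have anti2 : Antitone fun y : ℝ => ν {ω | y < g ω} := fun a b hab =>
    measure_mono fun ω hω => lt_of_le_of_lt hab hω
  have key : ∫⁻ y in Set.Ioi (0:ℝ), ν {ω | y < g ω} = ∫⁻ ω, ENNReal.ofReal (f ω * g ω) ∂P :=
    outer_lt' P hf hg hf0 hg0
  rw [integral_toReal anti2.measurable.aemeasurable
    (ae_lt_top anti2.measurable (by rw [key]; exact hfin)), key]

private lemma negflip (F : ℝ → ℝ) :
    ∫ x in Set.Iio (0:ℝ), F x = ∫ x in Set.Ioi (0:ℝ), F (-x) := by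
  rw [← integral_Iic_eq_integral_Iio]
  have h := integral_comp_neg_Iic (0:ℝ) (fun x => F (-x))
  simp only [neg_neg, neg_zero] at h
  exact h

end Aux

/-- For real-valued random variables `X, Y` with integrable product,
`E[XY] = ∫₀^∞∫₀^∞ P(X > x, Y > y) dx dy + ∫_{-∞}^0∫_{-∞}^0 P(X ≤ x, Y ≤ y) dx dy`
`- ∫_{-∞}^0∫₀^∞ P(X > x, Y ≤ y) dx dy - ∫₀^∞∫_{-∞}^0 P(X ≤ x, Y > y) dx dy`. -/
theorem expectation_mul_eq_integral_probs
    {Ω : Type*} [MeasurableSpace Ω] (P : Measure Ω) [IsProbabilityMeasure P]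
    (X Y : Ω → ℝ) (hX : Measurable X) (hY : Measurable Y)
    (hXY : Integrable (fun ω => X ω * Y ω) P) :
    ∫ ω, X ω * Y ω ∂P =
      (∫ y in Set.Ioi (0 : ℝ), ∫ x in Set.Ioi (0 : ℝ),
          (P {ω | x < X ω ∧ y < Y ω}).toReal)
      + (∫ y in Set.Iio (0 : ℝ), ∫ x in Set.Iio (0 : ℝ),
          (P {ω | X ω ≤ x ∧ Y ω ≤ y}).toReal)
      - (∫ y in Set.Iio (0 : ℝ), ∫ x in Set.Ioi (0 : ℝ),
          (P {ω | x < X ω ∧ Y ω ≤ y}).toReal)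
      - (∫ y in Set.Ioi (0 : ℝ), ∫ x in Set.Iio (0 : ℝ),
          (P {ω | X ω ≤ x ∧ y < Y ω}).toReal) := by
  set f1 : Ω → ℝ := fun ω => max (X ω) 0 with hf1
  set f2 : Ω → ℝ := fun ω => max (-X ω) 0 with hf2
  set g1 : Ω → ℝ := fun ω => max (Y ω) 0 with hg1
  set g2 : Ω → ℝ := fun ω => max (-Y ω) 0 with hg2
  have hf1m : Measurable f1 := hX.max measurable_const
  have hf2m : Measurable f2 := hX.neg.max measurable_const
  have hg1m : Measurable g1 := hY.max measurable_const
  have hg2m : Measurable g2 := hY.neg.max measurable_const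
  have hf10 : ∀ ω, 0 ≤ f1 ω := fun ω => le_max_right _ _
  have hf20 : ∀ ω, 0 ≤ f2 ω := fun ω => le_max_right _ _
  have hg10 : ∀ ω, 0 ≤ g1 ω := fun ω => le_max_right _ _
  have hg20 : ∀ ω, 0 ≤ g2 ω := fun ω => le_max_right _ _
  -- bounds
  have habs : ∀ (u v : Ω → ℝ) (hu0 : ∀ ω, 0 ≤ u ω) (hv0 : ∀ ω, 0 ≤ v ω)
      (hu : ∀ ω, u ω ≤ |X ω|) (hv : ∀ ω, v ω ≤ |Y ω|) (hm : Measurable (fun ω => u ω * v ω)),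
      Integrable (fun ω => u ω * v ω) P := by
    intro u v hu0 hv0 hu hv hm
    refine Integrable.mono hXY.abs hm.aestronglyMeasurable (ae_of_all _ fun ω => ?_)
    have h1 : u ω * v ω ≤ |X ω| * |Y ω| :=
      mul_le_mul (hu ω) (hv ω) (hv0 ω) (abs_nonneg _)
    have h2 : 0 ≤ u ω * v ω := mul_nonneg (hu0 ω) (hv0 ω)
    rw [Real.norm_eq_abs, Real.norm_eq_abs, abs_of_nonneg h2, abs_abs, abs_mul]
    exact h1
  have hfX1 : ∀ ω, f1 ω ≤ |X ω| := fun ω => max_le (le_abs_self _) (abs_nonneg _)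
  have hfX2 : ∀ ω, f2 ω ≤ |X ω| := fun ω => max_le (neg_le_abs _) (abs_nonneg _)
  have hgY1 : ∀ ω, g1 ω ≤ |Y ω| := fun ω => max_le (le_abs_self _) (abs_nonneg _)
  have hgY2 : ∀ ω, g2 ω ≤ |Y ω| := fun ω => max_le (neg_le_abs _) (abs_nonneg _)
  have h11 : Integrable (fun ω => f1 ω * g1 ω) P := habs _ _ hf10 hg10 hfX1 hgY1 (hf1m.mul hg1m)
  have h22 : Integrable (fun ω => f2 ω * g2 ω) P := habs _ _ hf20 hg20 hfX2 hgY2 (hf2m.mul hg2m)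
  have h12 : Integrable (fun ω => f1 ω * g2 ω) P := habs _ _ hf10 hg20 hfX1 hgY2 (hf1m.mul hg2m)
  have h21 : Integrable (fun ω => f2 ω * g1 ω) P := habs _ _ hf20 hg10 hfX2 hgY1 (hf2m.mul hg1m)
  -- each lintegral is finite
  have hfin11 := h11.lintegral_lt_top.ne
  have hfin22 := h22.lintegral_lt_top.ne
  have hfin12 := h12.lintegral_lt_top.ne
  have hfin21 := h21.lintegral_lt_top.ne
  -- integral of each nonneg product equals toReal of lintegral
  have hint : ∀ (u v : Ω → ℝ) (hu0 : ∀ ω, 0 ≤ u ω) (hv0 : ∀ ω, 0 ≤ v ω)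
      (hm : Measurable (fun ω => u ω * v ω)),
      ∫ ω, u ω * v ω ∂P = (∫⁻ ω, ENNReal.ofReal (u ω * v ω) ∂P).toReal := fun u v hu0 hv0 hm =>
    integral_eq_lintegral_of_nonneg_ae (ae_of_all _ fun ω => mul_nonneg (hu0 ω) (hv0 ω))
      hm.aestronglyMeasurable
  -- Term 1
  have T1 : (∫ y in Set.Ioi (0 : ℝ), ∫ x in Set.Ioi (0 : ℝ),
      (P {ω | x < X ω ∧ y < Y ω}).toReal) = ∫ ω, f1 ω * g1 ω ∂P := by
    rw [hint _ _ hf10 hg10 (hf1m.mul hg1m),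
      ← real_lt_lt P hf1m hg1m hf10 hg10 hfin11]
    refine setIntegral_congr_fun measurableSet_Ioi fun y hy => ?_
    refine setIntegral_congr_fun measurableSet_Ioi fun x hx => ?_
    have hx' : ¬ x < 0 := not_lt.mpr (le_of_lt hx)
    have hy' : ¬ y < 0 := not_lt.mpr (le_of_lt hy)
    congr 2
    ext ω
    simp [hf1, hg1, lt_max_iff, hx', hy']
  -- Term 2
  have hin2 : ∀ y : ℝ, ∫ x in Set.Iio (0:ℝ), (P {ω | X ω ≤ x ∧ Y ω ≤ y}).toReal
      = ∫ x in Set.Ioi (0:ℝ), (P {ω | X ω ≤ -x ∧ Y ω ≤ y}).toReal := fun y =>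
    negflip _
  have T2 : (∫ y in Set.Iio (0 : ℝ), ∫ x in Set.Iio (0 : ℝ),
      (P {ω | X ω ≤ x ∧ Y ω ≤ y}).toReal) = ∫ ω, f2 ω * g2 ω ∂P := by
    simp_rw [hin2]
    rw [negflip (fun y => ∫ x in Set.Ioi (0:ℝ), (P {ω | X ω ≤ -x ∧ Y ω ≤ y}).toReal)]
    rw [hint _ _ hf20 hg20 (hf2m.mul hg2m),
      ← real_le_le P hf2m hg2m hf20 hg20 hfin22]
    refine setIntegral_congr_fun measurableSet_Ioi fun y hy => ?_
    refine setIntegral_congr_fun measurableSet_Ioi fun x hx => ?_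
    have hx' : ¬ x ≤ 0 := not_le.mpr hx
    have hy' : ¬ y ≤ 0 := not_le.mpr hy
    congr 2
    ext ω
    simp [hf2, hg2, le_max_iff, le_neg, hx', hy']
  -- Term 3
  have T3 : (∫ y in Set.Iio (0 : ℝ), ∫ x in Set.Ioi (0 : ℝ),
      (P {ω | x < X ω ∧ Y ω ≤ y}).toReal) = ∫ ω, f1 ω * g2 ω ∂P := by
    rw [negflip (fun y => ∫ x in Set.Ioi (0:ℝ), (P {ω | x < X ω ∧ Y ω ≤ y}).toReal)]
    rw [hint _ _ hf10 hg20 (hf1m.mul hg2m),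
      ← real_lt_le P hf1m hg2m hf10 hg20 hfin12]
    refine setIntegral_congr_fun measurableSet_Ioi fun y hy => ?_
    refine setIntegral_congr_fun measurableSet_Ioi fun x hx => ?_
    have hx' : ¬ x < 0 := not_lt.mpr (le_of_lt hx)
    have hy' : ¬ y ≤ 0 := not_le.mpr hy
    congr 2
    ext ω
    simp [hf1, hg2, lt_max_iff, le_max_iff, le_neg, hx', hy']
  -- Term 4
  have hin4 : ∀ y : ℝ, ∫ x in Set.Iio (0:ℝ), (P {ω | X ω ≤ x ∧ y < Y ω}).toReal
      = ∫ x in Set.Ioi (0:ℝ), (P {ω | X ω ≤ -x ∧ y < Y ω}).toReal := fun y =>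
    negflip _
  have T4 : (∫ y in Set.Ioi (0 : ℝ), ∫ x in Set.Iio (0 : ℝ),
      (P {ω | X ω ≤ x ∧ y < Y ω}).toReal) = ∫ ω, f2 ω * g1 ω ∂P := by
    simp_rw [hin4]
    rw [hint _ _ hf20 hg10 (hf2m.mul hg1m),
      ← real_le_lt P hf2m hg1m hf20 hg10 hfin21]
    refine setIntegral_congr_fun measurableSet_Ioi fun y hy => ?_
    refine setIntegral_congr_fun measurableSet_Ioi fun x hx => ?_
    have hx' : ¬ x ≤ 0 := not_le.mpr hx
    have hy' : ¬ y < 0 := not_lt.mpr (le_of_lt hy)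
    congr 2
    ext ω
    simp [hf2, hg1, lt_max_iff, le_max_iff, le_neg, hx', hy']
  rw [T1, T2, T3, T4]
  have hXYeq : ∀ ω, X ω * Y ω = f1 ω * g1 ω + f2 ω * g2 ω - f1 ω * g2 ω - f2 ω * g1 ω := by
    intro ω
    have hx : f1 ω - f2 ω = X ω := max_zero_sub_eq_self (X ω)
    have hy : g1 ω - g2 ω = Y ω := max_zero_sub_eq_self (Y ω)
    rw [← hx, ← hy]; ring
  simp_rw [hXYeq]
  have ha : Integrable (fun ω => f1 ω * g1 ω + f2 ω * g2 ω) P := h11.add h22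
  have hb : Integrable (fun ω => f1 ω * g1 ω + f2 ω * g2 ω - f1 ω * g2 ω) P := ha.sub h12
  rw [integral_sub hb h21, integral_sub ha h12, integral_add h11 h22]
end

section
/- Let θ > 0 and let φ : (0,1] → ℝ be a measurable function such that z ↦ φ(z)/(z(1+z)) is integrable on (0,1]. Define r(x,y) = θ·max(x,y)·φ(min(x,y)/max(x,y)) for x, y > 0. Then ∫₀^∞∫₀^∞ r(x,y)·(1/(xy))·e^{−θ(x+y)} dx dy = 2·∫₀^1 φ(z)/(z(1+z)) dz. (This is the change-of-variables identity used to evaluate the double-integral component of the asymptotic variance of the blocks estimators.) -/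
/-!
Since `r` is homogeneous of degree one, substituting `y = x t` makes the integrand
`r(1, t) / t · exp (-θ (1 + t) x)`; integrating out `x` first (Fubini) leaves
`∫₀^∞ ψ` with `ψ t = r(1, t) / (θ t (1 + t))`. This `ψ` is invariant under `t ↦ 1/t` together
with the Jacobian `t⁻²`, so `∫₁^∞ ψ = ∫₀^1 ψ`, and on `(0, 1]` it equals `φ z / (z (1 + z))`.
-/

open MeasureTheory Set Real

section Inversion

variable {E : Type*} [NormedAddCommGroup E] [NormedSpace ℝ E]

theorem image_inv_Ioo_zero_one : (fun z : ℝ => z⁻¹) '' Ioo 0 1 = Ioi 1 := by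
  rw [image_inv_eq_inv, inv_Ioo_0_left one_pos, inv_one]

theorem hasDerivWithinAt_inv_Ioo_zero_one {z : ℝ} (hz : z ∈ Ioo (0 : ℝ) 1) :
    HasDerivWithinAt (fun z : ℝ => z⁻¹) (-(z ^ 2)⁻¹) (Ioo 0 1) z :=
  (hasDerivAt_inv hz.1.ne').hasDerivWithinAt

theorem integral_Ioi_one_eq_integral_Ioc_inv (g : ℝ → E) :
    ∫ t in Ioi 1, g t = ∫ z in Ioc 0 1, (z ^ 2)⁻¹ • g z⁻¹ := by
  rw [← image_inv_Ioo_zero_one, integral_Ioc_eq_integral_Ioo,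
    integral_image_eq_integral_abs_deriv_smul measurableSet_Ioo
      (fun z hz => hasDerivWithinAt_inv_Ioo_zero_one hz) inv_injective.injOn]
  simp only [abs_neg, abs_inv, abs_pow, sq_abs]

theorem integrableOn_Ioi_one_iff_integrableOn_Ioc_inv (g : ℝ → E) :
    IntegrableOn g (Ioi 1) ↔ IntegrableOn (fun z => (z ^ 2)⁻¹ • g z⁻¹) (Ioc 0 1) := by
  rw [← image_inv_Ioo_zero_one, integrableOn_Ioc_iff_integrableOn_Ioo,
    integrableOn_image_iff_integrableOn_abs_deriv_smul measurableSet_Ioo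
      (fun z hz => hasDerivWithinAt_inv_Ioo_zero_one hz) inv_injective.injOn]
  simp only [abs_neg, abs_inv, abs_pow, sq_abs]

end Inversion

section InvSymm

variable {g : ℝ → ℝ}

theorem integrableOn_Ioi_one_of_inv_symm (hg : IntegrableOn g (Ioc 0 1))
    (hinv : ∀ z ∈ Ioc (0 : ℝ) 1, (z ^ 2)⁻¹ * g z⁻¹ = g z) : IntegrableOn g (Ioi 1) :=
  (integrableOn_Ioi_one_iff_integrableOn_Ioc_inv g).mpr
    (hg.congr_fun (fun z hz => (hinv z hz).symm) measurableSet_Ioc)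

theorem integrableOn_Ioi_zero_of_inv_symm (hg : IntegrableOn g (Ioc 0 1))
    (hinv : ∀ z ∈ Ioc (0 : ℝ) 1, (z ^ 2)⁻¹ * g z⁻¹ = g z) : IntegrableOn g (Ioi 0) := by
  rw [← Ioc_union_Ioi_eq_Ioi zero_le_one]
  exact hg.union (integrableOn_Ioi_one_of_inv_symm hg hinv)

theorem integral_Ioi_zero_eq_two_mul_of_inv_symm (hg : IntegrableOn g (Ioc 0 1))
    (hinv : ∀ z ∈ Ioc (0 : ℝ) 1, (z ^ 2)⁻¹ * g z⁻¹ = g z) :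
    ∫ t in Ioi 0, g t = 2 * ∫ z in Ioc 0 1, g z := by
  rw [← Ioc_union_Ioi_eq_Ioi zero_le_one, setIntegral_union Ioc_disjoint_Ioi_same
    measurableSet_Ioi hg (integrableOn_Ioi_one_of_inv_symm hg hinv),
    integral_Ioi_one_eq_integral_Ioc_inv]
  simp only [smul_eq_mul]
  rw [setIntegral_congr_fun measurableSet_Ioc hinv, two_mul]

end InvSymm

theorem integrableOn_Ioi_mul_exp_neg_mul {c : ℝ} (hc : 0 < c) :
    IntegrableOn (fun x => c * exp (-c * x)) (Ioi 0) :=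
  (exp_neg_integrableOn_Ioi 0 hc).const_mul c

theorem integral_Ioi_mul_exp_neg_mul {c : ℝ} (hc : 0 < c) :
    ∫ x in Ioi (0 : ℝ), c * exp (-c * x) = 1 := by
  rw [integral_const_mul, integral_exp_mul_Ioi (neg_lt_zero.mpr hc)]
  field_simp
  simp

theorem integral_Ioi_integral_Ioi_mul_exp_density {g c : ℝ → ℝ} (hg : IntegrableOn g (Ioi 0))
    (hc_meas : Measurable c) (hc : ∀ t ∈ Ioi (0 : ℝ), 0 < c t) :
    ∫ x in Ioi (0 : ℝ), ∫ t in Ioi (0 : ℝ), g t * (c t * exp (-c t * x)) =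
      ∫ t in Ioi (0 : ℝ), g t := by
  have hmeas : AEStronglyMeasurable (Function.uncurry fun x t => g t * (c t * exp (-c t * x)))
      ((volume.restrict (Ioi 0)).prod (volume.restrict (Ioi 0))) :=
    hg.aestronglyMeasurable.comp_snd.mul (by fun_prop : Measurable fun p : ℝ × ℝ =>
      c p.2 * exp (-c p.2 * p.1)).aestronglyMeasurable
  have hint : Integrable (Function.uncurry fun x t => g t * (c t * exp (-c t * x)))
      ((volume.restrict (Ioi 0)).prod (volume.restrict (Ioi 0))) := by
    refine (integrable_prod_iff' hmeas).mpr ⟨?_, hg.norm.congr ?_⟩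
    · filter_upwards [ae_restrict_mem measurableSet_Ioi] with t ht
      exact (integrableOn_Ioi_mul_exp_neg_mul (hc t ht)).const_mul (g t)
    · filter_upwards [ae_restrict_mem measurableSet_Ioi] with t ht
      have hpos : ∀ x, 0 ≤ c t * exp (-c t * x) := fun x => by have := hc t ht; positivity
      simp only [Function.uncurry_apply_pair, norm_mul, Real.norm_of_nonneg (hpos _)]
      rw [integral_const_mul, integral_Ioi_mul_exp_neg_mul (hc t ht), mul_one]
  rw [integral_integral_swap hint]
  refine setIntegral_congr_fun measurableSet_Ioi fun t ht => ?_
  rw [integral_const_mul, integral_Ioi_mul_exp_neg_mul (hc t ht), mul_one]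

noncomputable def covarianceIntegrand (θ : ℝ) (φ : ℝ → ℝ) (x y : ℝ) : ℝ :=
  (θ * max x y * φ (min x y / max x y)) * (1 / (x * y)) * exp (-θ * (x + y))

/-- `r(1, t) / (θ t (1 + t))`: what remains of `covarianceIntegrand` after substituting
`y = x t` and integrating out `x`. -/
noncomputable def ratioIntegrand (φ : ℝ → ℝ) (t : ℝ) : ℝ :=
  max 1 t * φ (min 1 t / max 1 t) / (t * (1 + t))

theorem ratioIntegrand_of_mem_Ioc {φ : ℝ → ℝ} {z : ℝ} (hz : z ∈ Ioc (0 : ℝ) 1) :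
    ratioIntegrand φ z = φ z / (z * (1 + z)) := by
  simp [ratioIntegrand, max_eq_left hz.2, min_eq_right hz.2]

theorem inv_sq_mul_ratioIntegrand_inv {φ : ℝ → ℝ} {z : ℝ} (hz : z ∈ Ioc (0 : ℝ) 1) :
    (z ^ 2)⁻¹ * ratioIntegrand φ z⁻¹ = ratioIntegrand φ z := by
  have hz0 := hz.1
  have hle : 1 ≤ z⁻¹ := one_le_inv_iff₀.mpr hz
  rw [ratioIntegrand_of_mem_Ioc hz, ratioIntegrand, max_eq_right hle, min_eq_left hle, one_div,
    inv_inv]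
  field_simp
  ring

theorem mul_covarianceIntegrand_mul_left {θ x t : ℝ} (φ : ℝ → ℝ) (hx : 0 < x)
    (ht : 0 < t) :
    x * covarianceIntegrand θ φ x (x * t) =
      ratioIntegrand φ t * (θ * (1 + t) * exp (-(θ * (1 + t)) * x)) := by
  have hmax : max x (x * t) = x * max 1 t := by rw [mul_max_of_nonneg _ _ hx.le, mul_one]
  have hmin : min x (x * t) = x * min 1 t := by rw [mul_min_of_nonneg _ _ hx.le, mul_one]
  rw [covarianceIntegrand, hmax, hmin, mul_div_mul_left _ _ hx.ne', ratioIntegrand]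
  field_simp

theorem integral_Ioi_covarianceIntegrand {θ x : ℝ} (φ : ℝ → ℝ) (hx : 0 < x) :
    ∫ y in Ioi 0, covarianceIntegrand θ φ x y =
      ∫ t in Ioi 0, ratioIntegrand φ t * (θ * (1 + t) * exp (-(θ * (1 + t)) * x)) := by
  have hscale := integral_comp_mul_left_Ioi' (covarianceIntegrand θ φ x) 0 hx
  rw [mul_zero, smul_eq_mul, ← integral_const_mul] at hscale
  rw [← hscale]
  exact setIntegral_congr_fun measurableSet_Ioi fun t ht => mul_covarianceIntegrand_mul_left φ hx ht

theorem double_integral_covariance_change_of_variables_general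
    (θ : ℝ) (hθ : 0 < θ) (φ : ℝ → ℝ)
    (hφ_int : IntegrableOn (fun z => φ z / (z * (1 + z))) (Set.Ioc (0 : ℝ) 1)) :
    ∫ x in Set.Ioi (0 : ℝ), ∫ y in Set.Ioi (0 : ℝ),
        (θ * max x y * φ (min x y / max x y)) * (1 / (x * y)) * Real.exp (-θ * (x + y)) =
      2 * ∫ z in Set.Ioc (0 : ℝ) 1, φ z / (z * (1 + z)) := by
  have hψ_int : IntegrableOn (ratioIntegrand φ) (Ioc 0 1) :=
    hφ_int.congr_fun (fun z hz => (ratioIntegrand_of_mem_Ioc hz).symm) measurableSet_Ioc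
  have hψ_inv : ∀ z ∈ Ioc (0 : ℝ) 1, (z ^ 2)⁻¹ * ratioIntegrand φ z⁻¹ = ratioIntegrand φ z :=
    fun _ => inv_sq_mul_ratioIntegrand_inv
  calc _ = ∫ x in Ioi 0, ∫ t in Ioi 0,
          ratioIntegrand φ t * (θ * (1 + t) * exp (-(θ * (1 + t)) * x)) :=
        setIntegral_congr_fun measurableSet_Ioi fun x hx => integral_Ioi_covarianceIntegrand φ hx
    _ = ∫ t in Ioi 0, ratioIntegrand φ t :=
        integral_Ioi_integral_Ioi_mul_exp_density
          (integrableOn_Ioi_zero_of_inv_symm hψ_int hψ_inv) (by fun_prop)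
          fun t (ht : 0 < t) => by positivity
    _ = 2 * ∫ z in Ioc 0 1, φ z / (z * (1 + z)) := by
        rw [integral_Ioi_zero_eq_two_mul_of_inv_symm hψ_int hψ_inv,
          setIntegral_congr_fun measurableSet_Ioc fun z hz => ratioIntegrand_of_mem_Ioc hz]

/-- Change-of-variables identity for the double-integral component of the asymptotic
variance: with `r(x,y) = θ max(x,y) φ(min(x,y)/max(x,y))`,
`∫₀^∞∫₀^∞ r(x,y) (1/(xy)) e^{-θ(x+y)} dx dy = 2 ∫₀^1 φ(z)/(z(1+z)) dz`. -/
theorem double_integral_covariance_change_of_variables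
    (θ : ℝ) (hθ : 0 < θ) (φ : ℝ → ℝ) (hφ_meas : Measurable φ)
    (hφ_int : IntegrableOn (fun z => φ z / (z * (1 + z))) (Set.Ioc (0 : ℝ) 1)) :
    ∫ x in Set.Ioi (0 : ℝ), ∫ y in Set.Ioi (0 : ℝ),
        (θ * max x y * φ (min x y / max x y)) * (1 / (x * y)) * Real.exp (-θ * (x + y)) =
      2 * ∫ z in Set.Ioc (0 : ℝ) 1, φ z / (z * (1 + z)) :=
  double_integral_covariance_change_of_variables_general θ hθ φ hφ_int
end

section
/- For every θ > 0, ∫₀^1 ( log(z)·e^{−θz} + e^{−θ/z}/(θz) ) dz = −(log θ + γ)/θ. -/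
/-!
The substitution `z = 1/u` turns the second integral into `∫₁^∞ e^{-θu}/(θu) du`, and integration
by parts against `d(-e^{-θu}/θ)` identifies this with `∫₁^∞ log u · e^{-θu} du`. The whole integral
is therefore `∫₀^∞ log z · e^{-θz} dz`, which the scaling `z = t/θ` reduces to
`∫₀^∞ log t · e^{-t} dt = Γ'(1) = -γ`, the derivative of Euler's integral at `1`.
-/

open MeasureTheory Set Real Filter Topology
open scoped Pointwise

lemma abs_log_le_two_mul_rpow_add_rpow {x : ℝ} (hx : 0 < x) :
    |log x| ≤ 2 * (x ^ (-(1 / 2) : ℝ) + x ^ (1 / 2 : ℝ)) := by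
  have hpos := log_le_rpow_div hx.le (by norm_num : (0 : ℝ) < 1 / 2)
  have hneg := log_le_rpow_div (inv_pos.2 hx).le (by norm_num : (0 : ℝ) < 1 / 2)
  rw [log_inv, inv_rpow hx.le, ← rpow_neg hx.le] at hneg
  rw [abs_le]
  constructor <;> linarith [rpow_pos_of_pos hx (-(1 / 2) : ℝ), rpow_pos_of_pos hx (1 / 2 : ℝ)]

lemma integrableOn_log_mul_exp_neg_mul {θ : ℝ} (hθ : 0 < θ) :
    IntegrableOn (fun t => log t * exp (-θ * t)) (Ioi 0) := by
  have hdom : IntegrableOn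
      (fun t : ℝ => 2 * (t ^ (-(1 / 2) : ℝ) * exp (-θ * t ^ (1 : ℝ)) +
        t ^ (1 / 2 : ℝ) * exp (-θ * t ^ (1 : ℝ)))) (Ioi 0) :=
    ((integrableOn_rpow_mul_exp_neg_mul_rpow (by norm_num) one_pos hθ).add
      (integrableOn_rpow_mul_exp_neg_mul_rpow (by norm_num) one_pos hθ)).const_mul 2
  refine hdom.mono' (by fun_prop) ?_
  filter_upwards [ae_restrict_mem measurableSet_Ioi] with t (ht : 0 < t)
  rw [norm_mul, norm_of_nonneg (exp_pos _).le, rpow_one, ← add_mul, ← mul_assoc]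
  exact mul_le_mul_of_nonneg_right (abs_log_le_two_mul_rpow_add_rpow ht) (exp_pos _).le

lemma integral_log_mul_exp_neg : ∫ t in Ioi 0, log t * exp (-t) = -eulerMascheroniConstant := by
  set I := ∫ t in Ioi 0, log t * exp (-t)
  have hGammaIntegral : HasDerivAt Complex.GammaIntegral (I : ℂ) 1 := by
    convert Complex.hasDerivAt_GammaIntegral (s := 1) (by norm_num) using 1
    simp only [sub_self, Complex.cpow_zero, one_mul, I]
    exact_mod_cast (integral_ofReal (𝕜 := ℂ)).symm
  have hGamma : HasDerivAt Complex.Gamma (I : ℂ) 1 := by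
    refine hGammaIntegral.congr_of_eventuallyEq ?_
    filter_upwards [(isOpen_lt continuous_const Complex.continuous_re).mem_nhds
      (by norm_num : (0 : ℝ) < (1 : ℂ).re)] with s hs
    exact Complex.Gamma_eq_integral hs
  have hRealGamma : HasDerivAt Gamma I 1 := by
    simpa [Complex.Gamma_ofReal] using hGamma.real_of_complex
  exact hRealGamma.unique hasDerivAt_Gamma_one

lemma integral_log_mul_exp_neg_mul {θ : ℝ} (hθ : 0 < θ) :
    ∫ t in Ioi 0, log t * exp (-θ * t) = -(log θ + eulerMascheroniConstant) / θ := by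
  have hscale := integral_comp_mul_left_Ioi (fun t => log (t / θ) * exp (-t)) 0 hθ
  rw [mul_zero] at hscale
  have hlog_div : EqOn (fun t => log (t / θ) * exp (-t))
      (fun t => log t * exp (-t) - log θ * exp (-t)) (Ioi 0) := fun t (ht : 0 < t) => by
    simp only [log_div ht.ne' hθ.ne', sub_mul]
  have hexp := exp_neg_integrableOn_Ioi 0 one_pos
  simp only [neg_mul, one_mul] at hexp
  have hlog := integrableOn_log_mul_exp_neg_mul one_pos
  simp only [neg_mul, one_mul] at hlog
  rw [setIntegral_congr_fun measurableSet_Ioi hlog_div, integral_sub hlog (hexp.const_mul _),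
    integral_const_mul, integral_log_mul_exp_neg, integral_exp_neg_Ioi_zero] at hscale
  simp only [mul_div_cancel_left₀ _ hθ.ne', smul_eq_mul] at hscale
  simp only [neg_mul, hscale]
  field_simp
  ring

section InversionSubstitution

variable {E : Type*} [NormedAddCommGroup E] [NormedSpace ℝ E]

lemma image_inv_Ioi_one : (·⁻¹) '' Ioi (1 : ℝ) = Ioo 0 1 := by
  rw [image_inv_eq_inv, inv_Ioi₀ one_pos, inv_one]

lemma hasDerivWithinAt_inv_Ioi_one :
    ∀ u ∈ Ioi (1 : ℝ), HasDerivWithinAt (·⁻¹) (-(u ^ 2)⁻¹) (Ioi 1) u := fun _ hu =>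
  (hasDerivAt_inv (zero_lt_one.trans hu).ne').hasDerivWithinAt

lemma integrableOn_Ioc_zero_one_iff_comp_inv (f : ℝ → E) :
    IntegrableOn f (Ioc 0 1) ↔ IntegrableOn (fun u => (u ^ 2)⁻¹ • f u⁻¹) (Ioi 1) := by
  rw [integrableOn_Ioc_iff_integrableOn_Ioo, ← image_inv_Ioi_one,
    integrableOn_image_iff_integrableOn_abs_deriv_smul measurableSet_Ioi
      hasDerivWithinAt_inv_Ioi_one inv_injective.injOn]
  simp only [abs_neg, abs_inv, abs_pow, sq_abs]

lemma integral_Ioc_zero_one_eq_integral_comp_inv (f : ℝ → E) :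
    ∫ z in Ioc 0 1, f z = ∫ u in Ioi 1, (u ^ 2)⁻¹ • f u⁻¹ := by
  rw [integral_Ioc_eq_integral_Ioo, ← image_inv_Ioi_one,
    integral_image_eq_integral_abs_deriv_smul measurableSet_Ioi
      hasDerivWithinAt_inv_Ioi_one inv_injective.injOn]
  simp only [abs_neg, abs_inv, abs_pow, sq_abs]

end InversionSubstitution

lemma inv_sq_mul_exp_neg_div_inv (θ : ℝ) {u : ℝ} (hu : u ≠ 0) :
    (u ^ 2)⁻¹ * (exp (-θ / u⁻¹) / (θ * u⁻¹)) = exp (-θ * u) / (θ * u) := by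
  rw [div_inv_eq_mul]
  field_simp

lemma integrableOn_exp_neg_mul_div_Ioi_one {θ : ℝ} (hθ : 0 < θ) :
    IntegrableOn (fun u => exp (-θ * u) / (θ * u)) (Ioi 1) := by
  refine ((exp_neg_integrableOn_Ioi 1 hθ).div_const θ).mono'
    (by fun_prop : Measurable _).aestronglyMeasurable ?_
  filter_upwards [ae_restrict_mem measurableSet_Ioi] with u (hu : 1 < u)
  rw [norm_of_nonneg (by positivity), mul_comm θ, ← div_div, neg_mul]
  gcongr
  exact div_le_self (exp_pos _).le hu.le

lemma tendsto_log_mul_exp_neg_mul_atTop {θ : ℝ} (hθ : 0 < θ) :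
    Tendsto (fun u => log u * exp (-θ * u)) atTop (𝓝 0) := by
  refine squeeze_zero_norm' ?_ (by simpa using tendsto_rpow_mul_exp_neg_mul_atTop_nhds_zero 1 θ hθ)
  filter_upwards [eventually_ge_atTop 1] with u hu
  rw [norm_mul, norm_of_nonneg (log_nonneg hu), norm_of_nonneg (exp_pos _).le, neg_mul]
  gcongr
  exact log_le_self (zero_le_one.trans hu)

lemma integral_log_mul_exp_neg_mul_Ioi_one {θ : ℝ} (hθ : 0 < θ) :
    ∫ u in Ioi 1, log u * exp (-θ * u) = ∫ u in Ioi 1, exp (-θ * u) / (θ * u) := by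
  have hlog : ∀ u ∈ Ioi (1 : ℝ), HasDerivAt log u⁻¹ u := fun u hu =>
    hasDerivAt_log (zero_lt_one.trans hu).ne'
  have hexp : ∀ u ∈ Ioi (1 : ℝ), HasDerivAt (fun u => -exp (-θ * u) / θ) (exp (-θ * u)) u :=
    fun u _ => (((hasDerivAt_id' u).const_mul (-θ)).exp.neg.div_const θ).congr_deriv
      (by field_simp)
  have hboundary : Tendsto (fun u => log u * (-exp (-θ * u) / θ)) (𝓝[>] 1) (𝓝 0) := by
    have hcont : ContinuousAt (fun u => log u * (-exp (-θ * u) / θ)) 1 := by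
      fun_prop (disch := norm_num)
    simpa using hcont.tendsto.mono_left nhdsWithin_le_nhds
  have hinfty : Tendsto (fun u => log u * (-exp (-θ * u) / θ)) atTop (𝓝 0) := by
    simpa [mul_neg, neg_div, mul_div_assoc'] using
      ((tendsto_log_mul_exp_neg_mul_atTop hθ).div_const θ).neg
  have hinv_mul : ((fun u : ℝ => u⁻¹) * fun u => -exp (-θ * u) / θ) =
      fun u => -(exp (-θ * u) / (θ * u)) := by
    ext u
    simp only [Pi.mul_apply]
    ring
  have hparts := integral_Ioi_mul_deriv_eq_deriv_mul hlog hexp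
    ((integrableOn_log_mul_exp_neg_mul hθ).mono_set (Ioi_subset_Ioi zero_le_one))
    (hinv_mul ▸ (integrableOn_exp_neg_mul_div_Ioi_one hθ).neg) hboundary hinfty
  rw [hparts, ← Pi.mul_def (fun u : ℝ => u⁻¹), hinv_mul, integral_neg]
  ring

/-- For every `θ > 0`, `∫₀^1 (log(z) e^{-θz} + e^{-θ/z}/(θz)) dz = -(log θ + γ)/θ`. -/
theorem integral_log_exp_identity (θ : ℝ) (hθ : 0 < θ) :
    ∫ z in Set.Ioc (0 : ℝ) 1,
        (Real.log z * Real.exp (-θ * z) + Real.exp (-θ / z) / (θ * z)) =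
      -(Real.log θ + Real.eulerMascheroniConstant) / θ := by
  have hlog := integrableOn_log_mul_exp_neg_mul hθ
  have hsmall : IntegrableOn (fun z => log z * exp (-θ * z)) (Ioc 0 1) :=
    hlog.mono_set Ioc_subset_Ioi_self
  have hlarge := hlog.mono_set (Ioi_subset_Ioi zero_le_one)
  have hinv : EqOn (fun u => (u ^ 2)⁻¹ • (exp (-θ / u⁻¹) / (θ * u⁻¹)))
      (fun u => exp (-θ * u) / (θ * u)) (Ioi 1) := fun u hu =>
    inv_sq_mul_exp_neg_div_inv θ (zero_lt_one.trans hu).ne'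
  have hsingular : IntegrableOn (fun z => exp (-θ / z) / (θ * z)) (Ioc 0 1) :=
    (integrableOn_Ioc_zero_one_iff_comp_inv _).2
      ((integrableOn_exp_neg_mul_div_Ioi_one hθ).congr_fun hinv.symm measurableSet_Ioi)
  rw [integral_add hsmall hsingular,
    integral_Ioc_zero_one_eq_integral_comp_inv (fun z => exp (-θ / z) / (θ * z)),
    setIntegral_congr_fun measurableSet_Ioi hinv, ← integral_log_mul_exp_neg_mul_Ioi_one hθ,
    ← setIntegral_union (Ioc_disjoint_Ioi le_rfl) measurableSet_Ioi hsmall hlarge,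
    Ioc_union_Ioi_eq_Ioi zero_le_one, integral_log_mul_exp_neg_mul hθ]
end

section
/- Define g(z) = (1/z − e^{−z}/z − e^{−z})·(1/z) and h(z) = (e^{−z}/z − 1/z + 1)·e^{−z}/z for z > 0, and let E₁(z) = ∫_z^∞ e^{−t}/t dt (so that E₁(z) = −Ei(−z)). Then ∫₀^∞ ( h(z) + E₁(z)·g(z) ) dz = 4·log 2 − 2. (This integral identity yields the θ-independent value 8 log 2 − 4 of the limiting variance of the sliding-blocks log-statistic B_n^{sl}.) -/
/-!
Writing `h(z) = ∫₀¹ (1 - s) e^{-(1+s) z} ds` and integrating in `z` first gives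
`∫₀^∞ h = ∫₀¹ (1 - s)/(1 + s) ds = 2 log 2 - 1`.
The function `G(t) = (e^{-t} - 1 + t)/t` is the primitive of `g` vanishing at `0`, so Fubini on
the region `0 < z ≤ t` turns `∫₀^∞ E₁ g` into `∫₀^∞ (e^{-t}/t) G(t) dt`, and `(e^{-t}/t) G(t) = h(t)`.
Hence the integral is `2 (2 log 2 - 1)`.
-/

open MeasureTheory Set Real

theorem integrable_prod_of_nonneg_of_integrable_integral {α β : Type*} [MeasurableSpace α]
    [MeasurableSpace β] {μ : Measure α} {ν : Measure β} [SFinite μ] [SFinite ν]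
    {F : α × β → ℝ} (hF : AEStronglyMeasurable F (μ.prod ν))
    (hF0 : ∀ᵐ y ∂ν, ∀ᵐ x ∂μ, 0 ≤ F (x, y))
    (hslice : ∀ᵐ y ∂ν, Integrable (fun x => F (x, y)) μ)
    (hint : Integrable (fun y => ∫ x, F (x, y) ∂μ) ν) : Integrable F (μ.prod ν) := by
  refine (integrable_prod_iff' hF).2 ⟨hslice, hint.congr ?_⟩
  filter_upwards [hF0] with y hy
  exact integral_congr_ae (hy.mono fun x hx => (Real.norm_of_nonneg hx).symm)

section TriangleFubini

variable {a : ℝ} {f k : ℝ → ℝ}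

theorem indicator_setOf_le_eq_indicator_Iic (z t : ℝ) :
    {p : ℝ × ℝ | p.1 ≤ p.2}.indicator (fun p => k p.2 * f p.1) (z, t) =
      (Iic t).indicator (fun z => k t * f z) z := by
  simp [indicator_apply]

theorem indicator_setOf_le_eq_indicator_Ici (z t : ℝ) :
    {p : ℝ × ℝ | p.1 ≤ p.2}.indicator (fun p => k p.2 * f p.1) (z, t) =
      (Ici z).indicator (fun t => k t * f z) t := by
  simp [indicator_apply]

theorem integral_Ioi_indicator_setOf_le_left {t : ℝ} (ht : a < t) :
    ∫ z in Ioi a, {p : ℝ × ℝ | p.1 ≤ p.2}.indicator (fun p => k p.2 * f p.1) (z, t) =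
      k t * ∫ z in a..t, f z := by
  simp_rw [indicator_setOf_le_eq_indicator_Iic]
  rw [integral_indicator measurableSet_Iic, Measure.restrict_restrict measurableSet_Iic,
    Iic_inter_Ioi, integral_const_mul, intervalIntegral.integral_of_le ht.le]

theorem integral_Ioi_indicator_setOf_le_right {z : ℝ} (hz : a < z) :
    ∫ t in Ioi a, {p : ℝ × ℝ | p.1 ≤ p.2}.indicator (fun p => k p.2 * f p.1) (z, t) =
      (∫ t in Ioi z, k t) * f z := by
  simp_rw [indicator_setOf_le_eq_indicator_Ici]
  rw [integral_indicator measurableSet_Ici, Measure.restrict_restrict measurableSet_Ici,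
    inter_eq_left.2 (Ici_subset_Ioi.2 hz), integral_mul_const, integral_Ici_eq_integral_Ioi]

variable (hf : Measurable f) (hk : Measurable k) (hf0 : ∀ z ∈ Ioi a, 0 ≤ f z)
  (hk0 : ∀ t ∈ Ioi a, 0 ≤ k t) (hfint : ∀ t ∈ Ioi a, IntervalIntegrable f volume a t)
  (hint : IntegrableOn (fun t => k t * ∫ z in a..t, f z) (Ioi a))
include hf hk hf0 hk0 hfint hint

theorem integrable_indicator_setOf_le :
    Integrable ({p : ℝ × ℝ | p.1 ≤ p.2}.indicator (fun p => k p.2 * f p.1))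
      ((volume.restrict (Ioi a)).prod (volume.restrict (Ioi a))) := by
  refine integrable_prod_of_nonneg_of_integrable_integral ?_ ?_ ?_ ?_
  · exact ((hk.comp measurable_snd).mul (hf.comp measurable_fst)).indicator
      (measurableSet_le measurable_fst measurable_snd) |>.aestronglyMeasurable
  · filter_upwards [ae_restrict_mem measurableSet_Ioi] with t ht
    filter_upwards [ae_restrict_mem measurableSet_Ioi] with z hz
    exact indicator_nonneg (fun _ _ => mul_nonneg (hk0 t ht) (hf0 z hz)) _
  · filter_upwards [ae_restrict_mem measurableSet_Ioi] with t ht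
    simp_rw [indicator_setOf_le_eq_indicator_Iic]
    rw [integrable_indicator_iff measurableSet_Iic, IntegrableOn,
      Measure.restrict_restrict measurableSet_Iic, Iic_inter_Ioi]
    exact ((intervalIntegrable_iff_integrableOn_Ioc_of_le ht.le).1 (hfint t ht)).const_mul _
  · refine hint.congr ?_
    filter_upwards [ae_restrict_mem measurableSet_Ioi] with t ht
    exact (integral_Ioi_indicator_setOf_le_left ht).symm

theorem integrableOn_integral_Ioi_mul :
    IntegrableOn (fun z => (∫ t in Ioi z, k t) * f z) (Ioi a) := by
  refine (integrable_indicator_setOf_le hf hk hf0 hk0 hfint hint).integral_prod_left.congr ?_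
  filter_upwards [ae_restrict_mem measurableSet_Ioi] with z hz
  exact integral_Ioi_indicator_setOf_le_right hz

theorem integral_Ioi_integral_Ioi_mul :
    ∫ z in Ioi a, (∫ t in Ioi z, k t) * f z = ∫ t in Ioi a, k t * ∫ z in a..t, f z := by
  calc ∫ z in Ioi a, (∫ t in Ioi z, k t) * f z
      = ∫ z in Ioi a, ∫ t in Ioi a,
          {p : ℝ × ℝ | p.1 ≤ p.2}.indicator (fun p => k p.2 * f p.1) (z, t) :=
        setIntegral_congr_fun measurableSet_Ioi fun z hz =>
          (integral_Ioi_indicator_setOf_le_right hz).symm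
    _ = ∫ t in Ioi a, ∫ z in Ioi a,
          {p : ℝ × ℝ | p.1 ≤ p.2}.indicator (fun p => k p.2 * f p.1) (z, t) :=
        integral_integral_swap (integrable_indicator_setOf_le hf hk hf0 hk0 hfint hint)
    _ = ∫ t in Ioi a, k t * ∫ z in a..t, f z :=
        setIntegral_congr_fun measurableSet_Ioi fun t ht =>
          integral_Ioi_indicator_setOf_le_left ht

end TriangleFubini

namespace SlidingBlocks

noncomputable def g (z : ℝ) : ℝ := (1 / z - exp (-z) / z - exp (-z)) * (1 / z)

noncomputable def h (z : ℝ) : ℝ := (exp (-z) / z - 1 / z + 1) * exp (-z) / z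

noncomputable def G (t : ℝ) : ℝ := (exp (-t) - 1 + t) / t

theorem g_eq_div_sq (z : ℝ) : g z = (1 - exp (-z) * (1 + z)) / z ^ 2 := by
  rcases eq_or_ne z 0 with rfl | hz
  · simp [g]
  · rw [g]; field_simp; ring

theorem g_nonneg (z : ℝ) : 0 ≤ g z := by
  rw [g_eq_div_sq]
  refine div_nonneg ?_ (sq_nonneg z)
  have := mul_le_mul_of_nonneg_left (add_one_le_exp z) (exp_pos (-z)).le
  rw [← exp_add, neg_add_cancel, exp_zero] at this
  linarith [add_comm z 1]

theorem hasDerivAt_G {t : ℝ} (ht : t ≠ 0) : HasDerivAt G (g t) t := by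
  have hnum : HasDerivAt (fun t => exp (-t) - 1 + t) (1 - exp (-t)) t :=
    (((hasDerivAt_neg t).exp.sub_const 1).add (hasDerivAt_id' t)).congr_deriv (by ring)
  refine (hnum.div (hasDerivAt_id' t) ht).congr_deriv ?_
  rw [g_eq_div_sq]; field_simp; ring

-- The junk value `G 0 = 0 / 0 = 0` happens to be the limit of `G` at `0`.
theorem continuousAt_G_zero : ContinuousAt G 0 := by
  rw [← continuousWithinAt_compl_self, ContinuousWithinAt]
  have hslope := hasDerivAt_iff_tendsto_slope.1 (hasDerivAt_neg (0 : ℝ)).exp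
  refine ((hslope.const_add 1).congr' ?_).trans (by simp [G])
  filter_upwards [self_mem_nhdsWithin] with t (ht : t ≠ 0)
  rw [slope_def_field, neg_zero, exp_zero, G]; field_simp; ring

theorem continuous_G : Continuous G := by
  refine continuous_iff_continuousAt.2 fun t => ?_
  rcases eq_or_ne t 0 with rfl | ht
  · exact continuousAt_G_zero
  · exact (hasDerivAt_G ht).continuousAt

theorem intervalIntegrable_g (t : ℝ) : IntervalIntegrable g volume 0 t :=
  intervalIntegral.intervalIntegrable_deriv_of_nonneg continuous_G.continuousOn
    (fun _ hx => hasDerivAt_G (by rintro rfl; simp at hx; linarith)) (fun z _ => g_nonneg z)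

theorem integral_g {t : ℝ} (ht : 0 ≤ t) : ∫ z in (0)..t, g z = G t := by
  rw [intervalIntegral.integral_eq_sub_of_hasDerivAt_of_le ht continuous_G.continuousOn
    (fun _ hx => hasDerivAt_G hx.1.ne') (intervalIntegrable_g t)]
  simp [G]

theorem exp_neg_div_mul_integral_g {t : ℝ} (ht : 0 < t) :
    exp (-t) / t * ∫ z in (0)..t, g z = h t := by
  rw [integral_g ht.le, G, h]
  field_simp

theorem h_eq_integral {z : ℝ} (hz : z ≠ 0) :
    h z = ∫ s in (0)..1, (1 - s) * exp (-(1 + s) * z) := by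
  have hderiv : ∀ s ∈ uIcc (0 : ℝ) 1, HasDerivAt
      (fun s => exp (-(1 + s) * z) * ((1 - z) / z ^ 2 + s / z))
      ((1 - s) * exp (-(1 + s) * z)) s := by
    intro s _
    have hexp : HasDerivAt (fun s => exp (-(1 + s) * z)) (exp (-(1 + s) * z) * -z) s :=
      ((((hasDerivAt_id' s).const_add 1).neg.mul_const z).congr_deriv (by ring)).exp
    refine (hexp.mul (((hasDerivAt_id' s).div_const z).const_add _)).congr_deriv ?_
    field_simp; ring
  rw [intervalIntegral.integral_eq_sub_of_hasDerivAt hderiv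
    ((by fun_prop : Continuous _).intervalIntegrable _ _), h,
    show -(1 + 1) * z = -z + -z by ring, exp_add, add_zero, neg_mul, one_mul]
  field_simp
  ring

theorem integral_Ioi_one_sub_mul_exp {s : ℝ} (hs : -1 < s) :
    ∫ z in Ioi 0, (1 - s) * exp (-(1 + s) * z) = (1 - s) / (1 + s) := by
  rw [integral_const_mul, integral_exp_mul_Ioi (by linarith)]
  field_simp
  simp

theorem continuousOn_one_sub_div_one_add :
    ContinuousOn (fun s : ℝ => (1 - s) / (1 + s)) (Icc 0 1) :=
  (continuousOn_const.sub continuousOn_id).div (continuousOn_const.add continuousOn_id)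
    fun s hs => by linarith [hs.1]

theorem integral_one_sub_div_one_add : ∫ s in (0)..1, (1 - s) / (1 + s) = 2 * log 2 - 1 := by
  have hderiv : ∀ s ∈ uIcc (0 : ℝ) 1,
      HasDerivAt (fun s => 2 * log (1 + s) - s) ((1 - s) / (1 + s)) s := by
    intro s hs
    have hs : 0 < 1 + s := by simp at hs; linarith
    refine ((((hasDerivAt_id' s).const_add 1).log hs.ne').const_mul 2 |>.sub
      (hasDerivAt_id' s)).congr_deriv ?_
    field_simp; ring
  rw [intervalIntegral.integral_eq_sub_of_hasDerivAt hderiv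
    (continuousOn_one_sub_div_one_add.intervalIntegrable_of_Icc zero_le_one)]
  norm_num

theorem integrable_one_sub_mul_exp :
    Integrable (fun p : ℝ × ℝ => (1 - p.2) * exp (-(1 + p.2) * p.1))
      ((volume.restrict (Ioi 0)).prod (volume.restrict (Ioc 0 1))) := by
  refine integrable_prod_of_nonneg_of_integrable_integral
    (by fun_prop : Continuous _).aestronglyMeasurable ?_ ?_ ?_
  · filter_upwards [ae_restrict_mem measurableSet_Ioc] with s hs
    exact ae_of_all _ fun z => mul_nonneg (by linarith [hs.2]) (exp_pos _).le
  · filter_upwards [ae_restrict_mem measurableSet_Ioc] with s hs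
    exact (integrableOn_exp_mul_Ioi (by linarith [hs.1]) 0).const_mul _
  · refine IntegrableOn.congr_fun ?_
      (fun s hs => (integral_Ioi_one_sub_mul_exp (by linarith [hs.1])).symm) measurableSet_Ioc
    exact continuousOn_one_sub_div_one_add.integrableOn_Icc.mono_set Ioc_subset_Icc_self

theorem integrableOn_h : IntegrableOn h (Ioi 0) := by
  refine integrable_one_sub_mul_exp.integral_prod_left.congr ?_
  filter_upwards [ae_restrict_mem measurableSet_Ioi] with z hz
  rw [h_eq_integral hz.ne', intervalIntegral.integral_of_le zero_le_one]

theorem integral_h : ∫ z in Ioi 0, h z = 2 * log 2 - 1 := by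
  calc ∫ z in Ioi 0, h z
      = ∫ z in Ioi 0, ∫ s in Ioc 0 1, (1 - s) * exp (-(1 + s) * z) :=
        setIntegral_congr_fun measurableSet_Ioi fun z hz => by
          rw [h_eq_integral (ne_of_gt hz), intervalIntegral.integral_of_le zero_le_one]
    _ = ∫ s in Ioc 0 1, ∫ z in Ioi 0, (1 - s) * exp (-(1 + s) * z) :=
        integral_integral_swap integrable_one_sub_mul_exp
    _ = ∫ s in Ioc 0 1, (1 - s) / (1 + s) :=
        setIntegral_congr_fun measurableSet_Ioc fun s hs =>
          integral_Ioi_one_sub_mul_exp (by linarith [hs.1])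
    _ = 2 * log 2 - 1 := by
        rw [← intervalIntegral.integral_of_le zero_le_one, integral_one_sub_div_one_add]

theorem integrableOn_exp_neg_div_mul_integral_g :
    IntegrableOn (fun t => exp (-t) / t * ∫ z in (0)..t, g z) (Ioi 0) :=
  integrableOn_h.congr_fun (fun _ ht => (exp_neg_div_mul_integral_g ht).symm) measurableSet_Ioi

theorem integrableOn_E₁_mul_g :
    IntegrableOn (fun z => (∫ t in Ioi z, exp (-t) / t) * g z) (Ioi 0) :=
  integrableOn_integral_Ioi_mul (by unfold g; fun_prop) (by fun_prop) (fun z _ => g_nonneg z)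
    (fun t ht => div_nonneg (exp_pos _).le (le_of_lt ht)) (fun t _ => intervalIntegrable_g t)
    integrableOn_exp_neg_div_mul_integral_g

theorem integral_E₁_mul_g :
    ∫ z in Ioi 0, (∫ t in Ioi z, exp (-t) / t) * g z = ∫ t in Ioi 0, h t := by
  rw [integral_Ioi_integral_Ioi_mul (by unfold g; fun_prop) (by fun_prop)
    (fun z _ => g_nonneg z) (fun t ht => div_nonneg (exp_pos _).le (le_of_lt ht))
    (fun t _ => intervalIntegrable_g t) integrableOn_exp_neg_div_mul_integral_g]
  exact setIntegral_congr_fun measurableSet_Ioi fun _ ht => exp_neg_div_mul_integral_g ht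

end SlidingBlocks

open SlidingBlocks

/-- With `g(z) = (1/z - e^{-z}/z - e^{-z})/z`, `h(z) = (e^{-z}/z - 1/z + 1) e^{-z}/z` and the
exponential integral `E₁(z) = ∫_z^∞ e^{-t}/t dt`, one has
`∫₀^∞ (h(z) + E₁(z) g(z)) dz = 4 log 2 - 2`. -/
theorem integral_h_add_E1_mul_g :
    ∫ z in Set.Ioi (0 : ℝ),
        ((Real.exp (-z) / z - 1 / z + 1) * Real.exp (-z) / z +
          (∫ t in Set.Ioi z, Real.exp (-t) / t) *
            ((1 / z - Real.exp (-z) / z - Real.exp (-z)) * (1 / z))) =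
      4 * Real.log 2 - 2 := by
  change ∫ z in Ioi 0, (h z + (∫ t in Ioi z, exp (-t) / t) * g z) = _
  rw [integral_add integrableOn_h integrableOn_E₁_mul_g, integral_E₁_mul_g, integral_h]
  ring
end

section
/- Let α ∈ [0,1) and let (Z_t)_{t∈ℤ} be independent, each with the standard Fréchet(1) distribution, and define the stationary ARMAX process X_s = sup_{j≥0} (1−α)·α^j·Z_{s−j} for s ∈ ℤ. Then for every integer b ≥ 1 and every x > 0, P( max_{s=1,…,b} X_s ≤ x ) = exp( −(1 + (1−α)(b−1))/x ) = F(x)^{1+θ(b−1)}, where F(x) = exp(−1/x) is the stationary cdf and θ = 1−α is the extremal index of the process. -/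
/-! Borel–Cantelli shows that almost surely every supremum defining `X_s` is over a bounded
range (so the junk value `⨆ = 0` of unbounded ranges never matters), and then the event
`max_{1 ≤ s ≤ b} X_s ≤ x` is a.s. the event `⋂_{t ≤ b} {c_t Z_t ≤ x}`, where
`c_t = (1 - α) α^{(1 - t)⁺}` is the largest coefficient with which `Z_t` enters `X_1, …, X_b`.
By independence and the Fréchet cdf it has probability `exp (-(∑ c_t) / x)`, and
`∑_{t ≤ b} c_t = (b - 1)(1 - α) + 1`. -/

open MeasureTheory ProbabilityTheory Filter Set

def HasStdFrechetCDF {Ω : Type*} [MeasurableSpace Ω] (μ : Measure Ω) (W : Ω → ℝ) : Prop :=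
  ∀ z : ℝ, 0 < z → μ {ω | W ω ≤ z} = ENNReal.ofReal (Real.exp (-1 / z))

namespace HasStdFrechetCDF

variable {Ω : Type*} [MeasurableSpace Ω] {μ : Measure Ω} [IsProbabilityMeasure μ] {W : Ω → ℝ}
  {c x : ℝ}

theorem measure_const_mul_le (hW : HasStdFrechetCDF μ W) (hc : 0 ≤ c) (hx : 0 < x) :
    μ {ω | c * W ω ≤ x} = ENNReal.ofReal (Real.exp (-c / x)) := by
  rcases hc.eq_or_lt with rfl | hc
  · have huniv : {ω | 0 * W ω ≤ x} = univ := by ext; simp [hx.le]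
    rw [huniv, measure_univ, neg_zero, zero_div, Real.exp_zero, ENNReal.ofReal_one]
  · have hset : {ω | c * W ω ≤ x} = {ω | W ω ≤ x / c} := by
      ext ω; rw [mem_ofPred_eq, mem_ofPred_eq, le_div_iff₀ hc, mul_comm]
    rw [hset, hW _ (div_pos hx hc), div_div_eq_mul_div, neg_one_mul, neg_div]

theorem measure_lt_const_mul_le (hW : HasStdFrechetCDF μ W)
    (hWm : Measurable W) (hc : 0 ≤ c) (hx : 0 < x) :
    μ {ω | x < c * W ω} ≤ ENNReal.ofReal (c / x) := by
  have hcx : 0 ≤ c / x := div_nonneg hc hx.le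
  have hcompl : {ω | x < c * W ω} = {ω | c * W ω ≤ x}ᶜ := by ext; simp
  rw [hcompl, prob_compl_eq_one_sub (measurableSet_le (hWm.const_mul c) measurable_const),
    hW.measure_const_mul_le hc hx, tsub_le_iff_right,
    ← ENNReal.ofReal_add hcx (Real.exp_pos _).le, ← ENNReal.ofReal_one]
  refine ENNReal.ofReal_le_ofReal ?_
  have hexp := Real.add_one_le_exp (-c / x)
  rw [neg_div] at hexp ⊢
  linarith

end HasStdFrechetCDF

theorem ae_bddAbove_range_const_mul {Ω : Type*} [MeasurableSpace Ω] {μ : Measure Ω}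
    [IsProbabilityMeasure μ] {W : ℕ → Ω → ℝ} (hW : ∀ j, HasStdFrechetCDF μ (W j))
    (hWm : ∀ j, Measurable (W j)) {a : ℕ → ℝ} (ha : ∀ j, 0 ≤ a j) (ha_sum : Summable a) :
    ∀ᵐ ω ∂μ, BddAbove (range fun j => a j * W j ω) := by
  have htsum : ∑' j, μ {ω | 1 < a j * W j ω} ≠ ⊤ := by
    refine ne_top_of_le_ne_top ?_ (ENNReal.tsum_le_tsum fun j =>
      (hW j).measure_lt_const_mul_le (hWm j) (ha j) one_pos)
    simp only [div_one]
    rw [← ENNReal.ofReal_tsum_of_nonneg ha ha_sum]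
    exact ENNReal.ofReal_ne_top
  filter_upwards [ae_eventually_notMem htsum] with ω hω
  refine IsBoundedUnder.bddAbove_range (isBoundedUnder_of_eventually_le (a := 1) ?_)
  filter_upwards [hω] with j hj
  simpa using hj

section Independent

variable {Ω ι : Type*} [MeasurableSpace Ω] {μ : Measure Ω} [IsProbabilityMeasure μ]
  {Z : ι → Ω → ℝ} {c : ι → ℝ} {x : ℝ}

theorem measure_biInter_const_mul_le_of_iIndepFun (hZ_indep : iIndepFun Z μ)
    (hZ : ∀ i, HasStdFrechetCDF μ (Z i)) (hc : ∀ i, 0 ≤ c i) (hx : 0 < x) (s : Finset ι) :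
    μ (⋂ i ∈ s, {ω | c i * Z i ω ≤ x}) = ENNReal.ofReal (Real.exp (-(∑ i ∈ s, c i) / x)) := by
  have hpre : ∀ i, {ω | c i * Z i ω ≤ x} = Z i ⁻¹' {z | c i * z ≤ x} := fun i => rfl
  simp only [hpre]
  rw [hZ_indep.measure_inter_preimage_eq_mul s
      (fun i _ => measurableSet_le (measurable_const_mul _) measurable_const)]
  simp only [← hpre, fun i => (hZ i).measure_const_mul_le (hc i) hx]
  rw [← ENNReal.ofReal_prod_of_nonneg fun i _ => (Real.exp_pos _).le, ← Real.exp_sum]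
  simp only [neg_div, Finset.sum_div, Finset.sum_neg_distrib]

theorem measure_iInter_const_mul_le_of_iIndepFun [Countable ι]
    (hZ_meas : ∀ i, Measurable (Z i)) (hZ_indep : iIndepFun Z μ)
    (hZ : ∀ i, HasStdFrechetCDF μ (Z i)) (hc : ∀ i, 0 ≤ c i) {T : ℝ} (hT : HasSum c T)
    (hx : 0 < x) :
    μ (⋂ i, {ω | c i * Z i ω ≤ x}) = ENNReal.ofReal (Real.exp (-T / x)) := by
  set A : Finset ι → Set Ω := fun s => ⋂ i ∈ s, {ω | c i * Z i ω ≤ x} with hA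
  have hA_meas : ∀ s, NullMeasurableSet (A s) μ := fun s =>
    (Finset.measurableSet_biInter s fun i _ =>
      measurableSet_le ((hZ_meas i).const_mul _) measurable_const).nullMeasurableSet
  have hA_anti : Antitone A := fun s t hst => biInter_subset_biInter_left hst
  have hlim := tendsto_measure_iInter_atTop hA_meas hA_anti ⟨∅, measure_ne_top μ _⟩
  rw [hA, ← iInter_eq_iInter_finset] at hlim
  refine tendsto_nhds_unique hlim ?_
  simp only [Function.comp_def, measure_biInter_const_mul_le_of_iIndepFun hZ_indep hZ hc hx]
  have hT' : Tendsto (fun s : Finset ι => ∑ i ∈ s, c i) atTop (nhds T) := hT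
  exact (ENNReal.continuous_ofReal.tendsto _).comp
    ((Real.continuous_exp.tendsto _).comp (hT'.neg.div_const x))

end Independent

section ARMAX

variable {α : ℝ}

theorem hasSum_armax_coeff (hα0 : 0 ≤ α) (hα1 : α < 1) (n : ℕ) :
    HasSum (fun k : ℕ => (1 - α) * α ^ (k - n)) (n * (1 - α) + 1) := by
  rw [← hasSum_nat_add_iff' n]
  have hhead : ∑ i ∈ Finset.range n, (1 - α) * α ^ (i - n) = n * (1 - α) := by
    rw [Finset.sum_congr rfl fun i hi => by rw [Nat.sub_eq_zero_of_le (Finset.mem_range.1 hi).le]]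
    simp only [pow_zero, mul_one, Finset.sum_const, Finset.card_range, nsmul_eq_mul]
  simp only [Nat.add_sub_cancel, hhead, add_sub_cancel_left]
  have h1α : 1 - α ≠ 0 := by linarith
  simpa [h1α] using (hasSum_geometric_of_lt_one hα0 hα1).mul_left (1 - α)

-- With `b = n + 1`, the index `k` stands for `Z_{b - k}`; `k - n` is truncated subtraction.
theorem armax_block_le_iff (hα0 : 0 ≤ α) (hα1 : α ≤ 1) {x : ℝ} (hx : 0 ≤ x) (z : ℤ → ℝ)
    (n : ℕ) :
    (∀ s : ℤ, 1 ≤ s → s ≤ n + 1 → ∀ j : ℕ, (1 - α) * α ^ j * z (s - j) ≤ x) ↔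
      ∀ k : ℕ, (1 - α) * α ^ (k - n) * z (n + 1 - k) ≤ x := by
  constructor
  · intro h k
    have := h (n + 1 - min k n) (by omega) (by omega) (k - n)
    rwa [show (n + 1 - min k n : ℤ) - (k - n : ℕ) = n + 1 - k by omega] at this
  · intro h s hs1 hsn j
    have hk := h ((n + 1 - s).toNat + j)
    rw [show (n + 1 : ℤ) - ((n + 1 - s).toNat + j : ℕ) = s - j by omega] at hk
    rcases le_or_gt 0 (z (s - j)) with hz | hz
    · refine le_trans (mul_le_mul_of_nonneg_right ?_ hz) hk
      exact mul_le_mul_of_nonneg_left (pow_le_pow_of_le_one hα0 hα1 (by omega)) (by linarith)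
    · exact (mul_nonpos_of_nonneg_of_nonpos
        (mul_nonneg (by linarith) (pow_nonneg hα0 j)) hz.le).trans hx

end ARMAX

/-- For the stationary ARMAX process `X_s = sup_{j≥0} (1-α) α^j Z_{s-j}` built from i.i.d.
standard Fréchet(1) innovations, for every integer `b ≥ 1` and `x > 0`,
`P(max_{s=1,…,b} X_s ≤ x) = exp(-(1 + (1-α)(b-1))/x) = F(x)^{1+θ(b-1)}`
with `F(x) = exp(-1/x)` and extremal index `θ = 1 - α`. -/
theorem armax_block_maximum_cdf
    {Ω : Type*} [MeasurableSpace Ω] (μ : Measure Ω) [IsProbabilityMeasure μ]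
    (α : ℝ) (hα : α ∈ Set.Ico (0 : ℝ) 1)
    (Z : ℤ → Ω → ℝ) (hZ_meas : ∀ t, Measurable (Z t))
    (hZ_indep : iIndepFun Z μ)
    (hZ_cdf : ∀ t, ∀ z : ℝ, 0 < z →
      μ {ω | Z t ω ≤ z} = ENNReal.ofReal (Real.exp (-1 / z)))
    (X : ℤ → Ω → ℝ)
    (hX : ∀ s ω, X s ω = ⨆ j : ℕ, (1 - α) * α ^ j * Z (s - j) ω) :
    ∀ b : ℕ, 1 ≤ b → ∀ x : ℝ, 0 < x →
      μ {ω | ∀ s : ℤ, 1 ≤ s → s ≤ (b : ℤ) → X s ω ≤ x} =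
          ENNReal.ofReal (Real.exp (-(1 + (1 - α) * ((b : ℝ) - 1)) / x)) ∧
        Real.exp (-(1 + (1 - α) * ((b : ℝ) - 1)) / x) =
          Real.exp (-1 / x) ^ (1 + (1 - α) * ((b : ℝ) - 1)) := by
  obtain ⟨hα0, hα1⟩ := hα
  intro b hb x hx
  refine ⟨?_, by rw [← Real.exp_mul]; ring_nf⟩
  obtain ⟨n, rfl⟩ := Nat.exists_eq_add_of_le' hb
  have hbdd : ∀ᵐ ω ∂μ, ∀ s, BddAbove (range fun j : ℕ => (1 - α) * α ^ j * Z (s - j) ω) :=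
    ae_all_iff.2 fun s => ae_bddAbove_range_const_mul (fun _ => hZ_cdf _) (fun _ => hZ_meas _)
      (fun j => mul_nonneg (by linarith) (pow_nonneg hα0 j))
      ((summable_geometric_of_lt_one hα0 hα1).mul_left _)
  have hevent : {ω | ∀ s : ℤ, 1 ≤ s → s ≤ ((n + 1 : ℕ) : ℤ) → X s ω ≤ x} =ᵐ[μ]
      ⋂ k : ℕ, {ω | (1 - α) * α ^ (k - n) * Z (n + 1 - k) ω ≤ x} := by
    refine eventuallyEq_set.2 ?_
    filter_upwards [hbdd] with ω hω
    simp only [mem_ofPred_eq, mem_iInter, hX, Nat.cast_add, Nat.cast_one]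
    rw [← armax_block_le_iff hα0 hα1.le hx.le (Z · ω) n]
    exact forall_congr' fun s => imp_congr_right fun _ => imp_congr_right fun _ =>
      ciSup_le_iff (hω s)
  rw [measure_congr hevent, measure_iInter_const_mul_le_of_iIndepFun (fun _ => hZ_meas _)
    (hZ_indep.precomp fun k l hkl => by simpa using hkl) (fun _ => hZ_cdf _)
    (fun _ => mul_nonneg (by linarith) (pow_nonneg hα0 _)) (hasSum_armax_coeff hα0 hα1 n) hx]
  push_cast
  ring_nf
end

section
/- Let θ ∈ (0,1], c > 0, μ > 1/2 and q > 0. Let (b_n) and (k_n) be sequences of positive integers with b_n → ∞, k_n → ∞ and b_n = O(k_n^q), and set n = b_n·k_n. Then √(k_n)·log(n)·| exp(−θ·c·k_n^{−μ}) − (1 − c·k_n^{−μ}/b_n)^{1+θ(b_n−1)} | → 0 as n → ∞. (This verifies, for the ARMAX model, the technical Condition 4(iv) comparing the lower tail of Z_{n1} with that of the Exp(θ) distribution at the rate o(log(n)^{−1}k_n^{−1/2}).) -/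
/-!
Both survival functions lie in `[1 - x, 1]` for `x = c k^{-μ}`: for `exp (-θ x)` this is
`1 + y ≤ exp y`, and for `(1 - x/b)^{1+θ(b-1)}` it is Bernoulli's inequality with the real
exponent `1 + θ(b-1) ∈ [1, b]`. So their distance is at most `c k^{-μ}`, while
`b = O(k^q)` gives `log (b k) = O(log k)`; the product with `√k` is then
`O(k^{1/2-μ} log k) → 0` because `μ > 1/2`.
-/

open Filter Asymptotics Real

lemma one_sub_le_exp_neg_mul {θ x : ℝ} (hθ : θ ≤ 1) (hx : 0 ≤ x) :
    1 - x ≤ exp (-θ * x) := by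
  nlinarith [add_one_le_exp (-θ * x)]

lemma one_sub_le_one_sub_div_rpow {θ x b : ℝ} (hθ : θ ∈ Set.Icc (0 : ℝ) 1) (hx : 0 ≤ x)
    (hxb : x ≤ b) (hb : 1 ≤ b) :
    1 - x ≤ (1 - x / b) ^ (1 + θ * (b - 1)) := by
  obtain ⟨hθ0, hθ1⟩ := hθ
  have hxb' : x / b ≤ 1 := div_le_one_of_le₀ hxb (by linarith)
  have bernoulli := one_add_mul_self_le_rpow_one_add (s := -(x / b)) (by linarith)
    (p := 1 + θ * (b - 1)) (by nlinarith)
  have hpx : (1 + θ * (b - 1)) * (x / b) ≤ x :=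
    calc (1 + θ * (b - 1)) * (x / b) ≤ b * (x / b) := by gcongr; nlinarith
      _ = x := mul_div_cancel₀ x (by positivity)
  rw [← sub_eq_add_neg] at bernoulli
  linarith

lemma abs_exp_neg_mul_sub_one_sub_div_rpow_le {θ x b : ℝ} (hθ : θ ∈ Set.Icc (0 : ℝ) 1)
    (hx : 0 ≤ x) (hxb : x ≤ b) (hb : 1 ≤ b) :
    |exp (-θ * x) - (1 - x / b) ^ (1 + θ * (b - 1))| ≤ x := by
  have hexp_le : exp (-θ * x) ≤ 1 := exp_le_one_iff.2 (by nlinarith [hθ.1])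
  have hrpow_le : (1 - x / b) ^ (1 + θ * (b - 1)) ≤ 1 :=
    rpow_le_one (by rw [sub_nonneg]; exact div_le_one_of_le₀ hxb (by linarith))
      (by linarith [div_nonneg hx (by linarith : (0 : ℝ) ≤ b)]) (by nlinarith [hθ.1])
  rw [abs_sub_le_iff]
  constructor <;>
    linarith [one_sub_le_exp_neg_mul hθ.2 hx, one_sub_le_one_sub_div_rpow hθ hx hxb hb]

lemma log_mul_le_of_le_mul_rpow {b k D q : ℝ} (hb : 0 < b) (hk : 0 < k)
    (hbk : b ≤ D * k ^ q) :
    log (b * k) ≤ log D + (q + 1) * log k := by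
  have hD : 0 < D := pos_of_mul_pos_left (hb.trans_le hbk) (rpow_pos_of_pos hk q).le
  calc log (b * k) ≤ log (D * k ^ q * k) := by gcongr
    _ = log D + (q + 1) * log k := by
      rw [log_mul (by positivity) hk.ne', log_mul hD.ne' (by positivity), log_rpow hk]; ring

lemma tendsto_sqrt_mul_add_mul_log_mul_rpow_neg (A B : ℝ) {μ : ℝ} (hμ : 1 / 2 < μ) :
    Tendsto (fun t => √t * (A + B * log t) * t ^ (-μ)) atTop (nhds 0) := by
  have hs : 0 < μ - 1 / 2 := by linarith
  have hlog : (fun t => A + B * log t) =o[atTop] fun t => t ^ (μ - 1 / 2) :=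
    (isLittleO_const_log_atTop.trans (isLittleO_log_rpow_atTop hs)).add
      ((isLittleO_log_rpow_atTop hs).const_mul_left B)
  refine hlog.tendsto_div_nhds_zero.congr' ?_
  filter_upwards [eventually_gt_atTop 0] with t ht
  rw [sqrt_eq_rpow, rpow_neg ht.le, rpow_sub ht]
  field_simp

theorem armax_lower_tail_exponential_approx_general
    (θ c μ q : ℝ) (hθ : θ ∈ Set.Ioc (0 : ℝ) 1) (hc : 0 < c) (hμ : 1 / 2 < μ)
    (b k : ℕ → ℕ)
    (hb : Tendsto b atTop atTop) (hk : Tendsto k atTop atTop)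
    (hbq : (fun n => (b n : ℝ)) =O[atTop] fun n => (k n : ℝ) ^ q) :
    Tendsto
      (fun n =>
        Real.sqrt (k n) * Real.log ((b n : ℝ) * (k n : ℝ)) *
          |Real.exp (-θ * c * (k n : ℝ) ^ (-μ)) -
            (1 - c * (k n : ℝ) ^ (-μ) / (b n : ℝ)) ^ (1 + θ * ((b n : ℝ) - 1))|)
      atTop (nhds 0) := by
  have hkR : Tendsto (fun n => (k n : ℝ)) atTop atTop := tendsto_natCast_atTop_atTop.comp hk
  obtain ⟨D, hbD⟩ := hbq.bound
  have hx : Tendsto (fun n => c * (k n : ℝ) ^ (-μ)) atTop (nhds 0) := by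
    simpa using ((tendsto_rpow_neg_atTop (by linarith)).comp hkR).const_mul c
  have hdom := ((tendsto_sqrt_mul_add_mul_log_mul_rpow_neg (log D) (q + 1) hμ).comp hkR).const_mul c
  rw [mul_zero] at hdom
  have hb1 : ∀ᶠ n in atTop, (1 : ℝ) ≤ b n := (hb.eventually_ge_atTop 1).mono fun n h => by
    exact_mod_cast h
  have hk1 : ∀ᶠ n in atTop, (1 : ℝ) ≤ k n := hkR.eventually_ge_atTop 1
  have hlog0 : ∀ᶠ n in atTop, 0 ≤ log ((b n : ℝ) * k n) := (hb1.and hk1).mono fun n h =>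
    log_nonneg (one_le_mul_of_one_le_of_one_le h.1 h.2)
  refine squeeze_zero' (hlog0.mono fun n h => by positivity) ?_ hdom
  filter_upwards [hb1, hk1, hlog0, hx.eventually (eventually_le_nhds one_pos), hbD]
    with n hbn hkn hlog0n hxn hbDn
  rw [norm_natCast, norm_of_nonneg (by positivity)] at hbDn
  have hlog := log_mul_le_of_le_mul_rpow (by linarith) (by linarith) hbDn
  have hgap := abs_exp_neg_mul_sub_one_sub_div_rpow_le (Set.Ioc_subset_Icc_self hθ)
    (by positivity : 0 ≤ c * (k n : ℝ) ^ (-μ)) (hxn.trans hbn) hbn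
  rw [← mul_assoc] at hgap
  calc _ ≤ √(k n) * (log D + (q + 1) * log (k n)) * (c * (k n : ℝ) ^ (-μ)) := by
        gcongr
        exact mul_nonneg (sqrt_nonneg _) (hlog0n.trans hlog)
    _ = _ := by simp only [Function.comp_apply]; ring

/-- Verification of the lower-tail bias condition for the ARMAX model: for `θ ∈ (0,1]`,
`c > 0`, `μ > 1/2`, block lengths `b_n → ∞` with `b_n = O(k_n^q)` and `k_n → ∞`, setting
`n = b_n k_n`, one has
`√k_n · log n · |exp(-θ c k_n^{-μ}) - (1 - c k_n^{-μ}/b_n)^{1+θ(b_n-1)}| → 0`. -/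
theorem armax_lower_tail_exponential_approx
    (θ c μ q : ℝ) (hθ : θ ∈ Set.Ioc (0 : ℝ) 1) (hc : 0 < c) (hμ : 1 / 2 < μ) (hq : 0 < q)
    (b k : ℕ → ℕ)
    (hb : Tendsto b atTop atTop) (hk : Tendsto k atTop atTop)
    (hbq : (fun n => (b n : ℝ)) =O[atTop] fun n => (k n : ℝ) ^ q) :
    Tendsto
      (fun n =>
        Real.sqrt (k n) * Real.log ((b n : ℝ) * (k n : ℝ)) *
          |Real.exp (-θ * c * (k n : ℝ) ^ (-μ)) -
            (1 - c * (k n : ℝ) ^ (-μ) / (b n : ℝ)) ^ (1 + θ * ((b n : ℝ) - 1))|)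
      atTop (nhds 0) :=
  armax_lower_tail_exponential_approx_general θ c μ q hθ hc hμ b k hb hk hbq
end

section
/- Let α ∈ (0,1) and θ = 1−α. For z ∈ (0,1] let w(z) = ⌊log(z)/log(α)⌋, and define E₁₂(z) = (α^{w(z)+1} + z + z·w(z)·(1−α))/(1−α)² and E₀(z) = (1−α^{w(z)+1})/(1−α) − z·(w(z)+1). Then 2θ³·∫₀^1 ( θ·E₁₂(z) − (1/θ − E₀(z)) ) / (z(1+z)) dz + (π²/6 − 2 log 2)·θ² = θ²·( π²/6 + 2 log(2)·(α − 1) ). (This is the closed-form asymptotic variance σ²_{dj,C} of the disjoint-blocks CFG-estimator in the ARMAX model, using the ARMAX cluster moments E[ξ₁^{(z)}ξ₂^{(z)}] = E₁₂(z) and E[ξ₁^{(z)}𝟙(ξ₂^{(z)}=0)] = E₀(z).) -/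
open MeasureTheory

/-- Closed-form asymptotic variance of the disjoint-blocks CFG-estimator in the ARMAX model:
with `θ = 1-α`, `w(z) = ⌊log z / log α⌋`,
`E₁₂(z) = (α^{w+1} + z + z w (1-α))/(1-α)²` and `E₀(z) = (1-α^{w+1})/(1-α) - z(w+1)`,
`2θ³ ∫₀^1 (θ E₁₂(z) - (1/θ - E₀(z)))/(z(1+z)) dz + (π²/6 - 2 log 2) θ²`
`= θ² (π²/6 + 2 log(2)(α-1))`. -/
theorem armax_cfg_disjoint_variance
    (α θ : ℝ) (hα : α ∈ Set.Ioo (0 : ℝ) 1) (hθ : θ = 1 - α) :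
    2 * θ ^ 3 *
        (∫ z in Set.Ioc (0 : ℝ) 1,
          (θ * ((α ^ (⌊Real.log z / Real.log α⌋ + 1) + z +
                  z * (⌊Real.log z / Real.log α⌋ : ℝ) * (1 - α)) / (1 - α) ^ 2) -
            (1 / θ -
              ((1 - α ^ (⌊Real.log z / Real.log α⌋ + 1)) / (1 - α) -
                z * ((⌊Real.log z / Real.log α⌋ : ℝ) + 1)))) /
            (z * (1 + z)))
      + (Real.pi ^ 2 / 6 - 2 * Real.log 2) * θ ^ 2 =
    θ ^ 2 * (Real.pi ^ 2 / 6 + 2 * Real.log 2 * (α - 1)) := by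
  obtain ⟨hα0, hα1⟩ := hα
  have hθ0 : θ ≠ 0 := by rw [hθ]; intro h; linarith
  have h1α : (1 : ℝ) - α ≠ 0 := by intro h; linarith
  have key : Set.EqOn
      (fun z : ℝ =>
        (θ * ((α ^ (⌊Real.log z / Real.log α⌋ + 1) + z +
                  z * (⌊Real.log z / Real.log α⌋ : ℝ) * (1 - α)) / (1 - α) ^ 2) -
            (1 / θ -
              ((1 - α ^ (⌊Real.log z / Real.log α⌋ + 1)) / (1 - α) -
                z * ((⌊Real.log z / Real.log α⌋ : ℝ) + 1)))) /
            (z * (1 + z)))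
      (fun z : ℝ => α / θ * (1 + z)⁻¹) (Set.Ioc (0 : ℝ) 1) := by
    intro z hz
    have hz0 : z ≠ 0 := ne_of_gt hz.1
    have hz1 : (1 : ℝ) + z ≠ 0 := by nlinarith [hz.1]
    simp only
    rw [hθ]
    field_simp
    ring
  rw [setIntegral_congr_fun measurableSet_Ioc key]
  have hI : (∫ z in Set.Ioc (0 : ℝ) 1, α / θ * (1 + z)⁻¹) = α / θ * Real.log 2 := by
    rw [← intervalIntegral.integral_of_le zero_le_one,
      intervalIntegral.integral_const_mul]
    have := intervalIntegral.integral_comp_add_left (a := (0:ℝ)) (b := 1)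
      (fun x : ℝ => x⁻¹) 1
    rw [this]
    norm_num
    
  rw [hI, hθ]
  have h : (1 : ℝ) - α ≠ 0 := h1α
  field_simp
  ring
end

section
/- As p → ∞, the asymptotic variance of the disjoint-blocks Root-estimator in the serially independent case converges to that of the CFG-estimator: lim_{p→∞} [ (2p/B(1/p,1/p))·( p² + 2^{−2/p}·p ) − p² − p ] = π²/6 − 2·log 2, where B(x,y) = Γ(x)Γ(y)/Γ(x+y) is the Beta function. -/
/-! With `x = 1/p` and `F x = Γ(1 + 2x) / Γ(1 + x)² = 2 / (x B(x, x))`, the Root variance is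
`(F x - 1) / x² + F x · (2^(-2x) - 1) / x + x · (F x - 1) / x²`. Euler's limit formula writes
`F x` as the product of `(1 + a)² / (1 + 2a)` over `a = x / m`, `m ≥ 1`, and each factor lies
between `exp (a² (1 - 2a))` and `exp a²`. Since `∑ 1 / m² = π² / 6`, this squeezes `F x` between
`exp ((1 - 2x) π² x² / 6)` and `exp (π² x² / 6)`, so `(F x - 1) / x² → π² / 6`, while
`(2^(-2x) - 1) / x → -2 log 2`. -/

open Filter

/-- The Beta function `B(x,y) = Γ(x)Γ(y)/Γ(x+y)`. -/
noncomputable def betaFun (x y : ℝ) : ℝ :=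
  Real.Gamma x * Real.Gamma y / Real.Gamma (x + y)

namespace RootCFG

open Finset Real Topology Nat

lemma exp_le_inv_one_sub {u : ℝ} (hu : u < 1) : exp u ≤ (1 - u)⁻¹ := by
  rw [le_inv_comm₀ (exp_pos u) (by linarith), ← exp_neg]
  linarith [add_one_le_exp (-u)]

lemma tendsto_sq_nhdsGT_zero : Tendsto (fun x : ℝ => x ^ 2) (𝓝[>] 0) (𝓝[≠] 0) := by
  refine tendsto_nhdsWithin_of_tendsto_nhds_of_eventually_within _ ?_ ?_
  · simpa using ((continuous_pow 2).tendsto (0 : ℝ)).mono_left nhdsWithin_le_nhds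
  · filter_upwards [self_mem_nhdsWithin] with x (hx : 0 < x) using pow_ne_zero 2 hx.ne'

noncomputable def gammaRatio (x : ℝ) : ℝ := Gamma (1 + 2 * x) / Gamma (1 + x) ^ 2

noncomputable def eulerFactor (a : ℝ) : ℝ := (1 + a) ^ 2 / (1 + 2 * a)

lemma eulerFactor_nonneg {a : ℝ} (ha : 0 ≤ a) : 0 ≤ eulerFactor a := by
  unfold eulerFactor; positivity

lemma eulerFactor_le_exp {a : ℝ} (ha : 0 ≤ a) : eulerFactor a ≤ exp (a ^ 2) := calc
  eulerFactor a ≤ a ^ 2 + 1 := by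
    rw [eulerFactor, div_le_iff₀ (by positivity)]; nlinarith [pow_nonneg ha 3]
  _ ≤ exp (a ^ 2) := add_one_le_exp _

lemma exp_le_eulerFactor {a : ℝ} (ha : 0 ≤ a) : exp (a ^ 2 * (1 - 2 * a)) ≤ eulerFactor a := by
  have hu : a ^ 2 * (1 - 2 * a) < 1 := by
    nlinarith [mul_nonneg ha (sq_nonneg (a - 1)), sq_nonneg (3 * a - 1)]
  refine (exp_le_inv_one_sub hu).trans ?_
  rw [eulerFactor, inv_eq_one_div, div_le_div_iff₀ (by linarith) (by positivity)]
  nlinarith [pow_nonneg ha 4, pow_nonneg ha 5, pow_nonneg ha 3]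

lemma eulerFactor_div_natCast_add_one (x : ℝ) (j : ℕ) :
    eulerFactor (x / (j + 1)) = (1 + x + j) ^ 2 / ((j + 1) * (1 + 2 * x + j)) := by
  have hj : (j + 1 : ℝ) ≠ 0 := by positivity
  rw [eulerFactor]
  field_simp
  ring

lemma prod_eulerFactor_eq_gammaSeq {x : ℝ} (hx : 0 ≤ x) {n : ℕ} (hn : n ≠ 0) :
    ∏ j ∈ range (n + 1), eulerFactor (x / (j + 1)) =
      GammaSeq (1 + 2 * x) n / GammaSeq (1 + x) n ^ 2 * (n / (n + 1)) := by
  have hn0 : (0 : ℝ) < n := by positivity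
  have hfact : ∏ j ∈ range (n + 1), ((j : ℝ) + 1) = (n + 1) * n ! := by
    rw [prod_range_succ, mul_comm]
    exact_mod_cast congrArg _ (prod_range_add_one_eq_factorial n)
  simp_rw [eulerFactor_div_natCast_add_one, prod_div_distrib, prod_mul_distrib, prod_pow, hfact,
    GammaSeq, show (1 : ℝ) + 2 * x = 1 + (x + x) by ring, rpow_add hn0, rpow_one]
  have hA : 0 < ∏ j ∈ range (n + 1), (1 + x + j : ℝ) := prod_pos fun j _ => by positivity
  have hB : 0 < ∏ j ∈ range (n + 1), (1 + (x + x) + j : ℝ) := prod_pos fun j _ => by positivity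
  field_simp

lemma tendsto_prod_eulerFactor {x : ℝ} (hx : 0 ≤ x) :
    Tendsto (fun n => ∏ j ∈ range n, eulerFactor (x / (j + 1))) atTop (𝓝 (gammaRatio x)) := by
  have hΓ : Gamma (1 + x) ≠ 0 := (Gamma_pos_of_pos (by linarith)).ne'
  have h := ((GammaSeq_tendsto_Gamma (1 + 2 * x)).div ((GammaSeq_tendsto_Gamma _).pow 2)
    (pow_ne_zero 2 hΓ)).mul (tendsto_natCast_div_add_atTop (1 : ℝ))
  rw [mul_one] at h
  rw [← tendsto_add_atTop_iff_nat 1]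
  refine h.congr' ?_
  filter_upwards [eventually_ne_atTop 0] with n hn
  exact (prod_eulerFactor_eq_gammaSeq hx hn).symm

lemma hasSum_sq_div_natCast_add_one (x : ℝ) :
    HasSum (fun m : ℕ => (x / (m + 1)) ^ 2) (π ^ 2 / 6 * x ^ 2) := by
  have h := ((hasSum_nat_add_iff' 1).mpr hasSum_zeta_two).mul_right (x ^ 2)
  simp only [range_one, sum_singleton, Nat.cast_zero, zero_pow two_ne_zero, div_zero,
    sub_zero, Nat.cast_add, Nat.cast_one] at h
  exact h.congr_fun fun m => by rw [div_pow, one_div_mul_eq_div]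

lemma gammaRatio_le_exp {x : ℝ} (hx : 0 ≤ x) : gammaRatio x ≤ exp (π ^ 2 / 6 * x ^ 2) := by
  refine le_of_tendsto (tendsto_prod_eulerFactor hx) (Eventually.of_forall fun n => ?_)
  calc ∏ j ∈ range n, eulerFactor (x / (j + 1))
      ≤ ∏ j ∈ range n, exp ((x / (j + 1)) ^ 2) :=
        prod_le_prod (fun j _ => eulerFactor_nonneg (by positivity))
          fun j _ => eulerFactor_le_exp (by positivity)
    _ = exp (∑ j ∈ range n, (x / (j + 1)) ^ 2) := (exp_sum _ _).symm
    _ ≤ exp (π ^ 2 / 6 * x ^ 2) :=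
        exp_le_exp.mpr <|
          sum_le_hasSum _ (fun j _ => by positivity) (hasSum_sq_div_natCast_add_one x)

lemma exp_le_gammaRatio {x : ℝ} (hx : 0 ≤ x) :
    exp ((1 - 2 * x) * (π ^ 2 / 6 * x ^ 2)) ≤ gammaRatio x := by
  have h := (continuous_exp.tendsto _).comp
    ((hasSum_sq_div_natCast_add_one x).tendsto_sum_nat.const_mul (1 - 2 * x))
  refine le_of_tendsto_of_tendsto' h (tendsto_prod_eulerFactor hx) fun n => ?_
  simp only [Function.comp_apply, mul_sum, exp_sum]
  refine prod_le_prod (fun j _ => (exp_pos _).le) fun j _ => ?_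
  have hj : x / (j + 1) ≤ x := div_le_self hx (by linarith [j.cast_nonneg (α := ℝ)])
  refine le_trans ?_ (exp_le_eulerFactor (by positivity))
  rw [exp_le_exp, mul_comm]
  exact mul_le_mul_of_nonneg_left (by linarith) (sq_nonneg _)

lemma tendsto_exp_mul_sub_one_div (a : ℝ) :
    Tendsto (fun t => (exp (a * t) - 1) / t) (𝓝[≠] 0) (𝓝 a) := by
  have h : HasDerivAt (fun t => exp (a * t)) a 0 := by
    simpa using ((hasDerivAt_id (0 : ℝ)).const_mul a).exp
  simpa [div_eq_inv_mul] using h.tendsto_slope_zero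

lemma tendsto_rpow_mul_sub_one_div {b : ℝ} (hb : 0 < b) (a : ℝ) :
    Tendsto (fun t => (b ^ (a * t) - 1) / t) (𝓝[≠] 0) (𝓝 (a * log b)) := by
  convert tendsto_exp_mul_sub_one_div (a * log b) using 4 with t
  rw [rpow_def_of_pos hb]
  ring_nf

lemma tendsto_gammaRatio_sub_one_div_sq :
    Tendsto (fun x => (gammaRatio x - 1) / x ^ 2) (𝓝[>] 0) (𝓝 (π ^ 2 / 6)) := by
  set c := π ^ 2 / 6
  have hlow : Tendsto (fun x : ℝ => (1 - 2 * x) * c) (𝓝[>] 0) (𝓝 c) := by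
    have h : Tendsto (fun x : ℝ => (1 - 2 * x) * c) (𝓝 0) (𝓝 ((1 - 2 * 0) * c)) :=
      (Continuous.tendsto (by fun_prop) _)
    simpa using h.mono_left nhdsWithin_le_nhds
  have hup := (tendsto_exp_mul_sub_one_div c).comp tendsto_sq_nhdsGT_zero
  refine tendsto_of_tendsto_of_tendsto_of_le_of_le' hlow hup ?_ ?_
  all_goals filter_upwards [self_mem_nhdsWithin] with x (hx : 0 < x)
  · rw [le_div_iff₀ (by positivity)]
    linarith [add_one_le_exp ((1 - 2 * x) * (c * x ^ 2)), exp_le_gammaRatio hx.le]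
  · exact div_le_div_of_nonneg_right (by linarith [gammaRatio_le_exp hx.le]) (by positivity)

lemma tendsto_gammaRatio_nhdsGT_zero : Tendsto gammaRatio (𝓝[>] 0) (𝓝 1) := by
  have h := (tendsto_gammaRatio_sub_one_div_sq.mul
    (tendsto_sq_nhdsGT_zero.mono_right nhdsWithin_le_nhds)).add_const 1
  rw [mul_zero, zero_add] at h
  refine h.congr' ?_
  filter_upwards [self_mem_nhdsWithin] with x (hx : 0 < x)
  field_simp
  ring

lemma gammaRatio_pos {x : ℝ} (hx : -1 / 2 < x) : 0 < gammaRatio x :=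
  div_pos (Gamma_pos_of_pos (by linarith)) (pow_pos (Gamma_pos_of_pos (by linarith)) 2)

lemma betaFun_self {x : ℝ} (hx : 0 < x) : betaFun x x = 2 / (x * gammaRatio x) := by
  have h1 : Gamma x = Gamma (1 + x) / x := by
    rw [add_comm, Gamma_add_one hx.ne']; field_simp
  have h2 : Gamma (x + x) = Gamma (1 + 2 * x) / (2 * x) := by
    rw [← two_mul, add_comm, Gamma_add_one (by positivity)]; field_simp
  have hΓ₁ := Gamma_pos_of_pos (show 0 < 1 + x by linarith)
  have hΓ₂ := Gamma_pos_of_pos (show 0 < 1 + 2 * x by linarith)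
  rw [betaFun, gammaRatio, h1, h2]
  field_simp

end RootCFG

open RootCFG Real Topology

/-- As `p → ∞`, the asymptotic variance of the disjoint-blocks Root-estimator in the
serially independent case converges to that of the CFG-estimator:
`lim_{p→∞} (2p/B(1/p,1/p)) (p² + 2^{-2/p} p) - p² - p = π²/6 - 2 log 2`. -/
theorem root_variance_tendsto_cfg_variance :
    Tendsto
      (fun p : ℝ =>
        (2 * p / betaFun (1 / p) (1 / p)) * (p ^ 2 + (2 : ℝ) ^ (-2 / p) * p) - p ^ 2 - p)
      atTop (nhds (Real.pi ^ 2 / 6 - 2 * Real.log 2)) := by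
  have hq := tendsto_gammaRatio_sub_one_div_sq
  have hid : Tendsto (fun x : ℝ => x) (𝓝[>] 0) (𝓝 0) := nhdsWithin_le_nhds
  have hrpow := (tendsto_rpow_mul_sub_one_div two_pos (-2)).mono_left (nhdsGT_le_nhdsNE 0)
  have hlim : Tendsto (fun x => (gammaRatio x - 1) / x ^ 2 +
      gammaRatio x * ((2 ^ (-2 * x) - 1) / x) + x * ((gammaRatio x - 1) / x ^ 2))
      (𝓝[>] 0) (𝓝 (π ^ 2 / 6 - 2 * log 2)) := by
    convert (hq.add (tendsto_gammaRatio_nhdsGT_zero.mul hrpow)).add (hid.mul hq) using 2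
    ring
  refine (hlim.comp tendsto_inv_atTop_nhdsGT_zero).congr' ?_
  filter_upwards [eventually_gt_atTop 0] with p hp
  rw [Function.comp_apply, one_div, betaFun_self (inv_pos.mpr hp),
    show -2 / p = -2 * p⁻¹ by ring]
  have hF := gammaRatio_pos (show -1 / 2 < p⁻¹ by linarith [inv_pos.mpr hp])
  field_simp
  ring
end
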